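/- arXiv:2312.05564 — 8 statements merged into one kernel-verified Lean document; each statement's English description precedes it below -/
import Mathlib

section
/- Every finite simple graph G has an almost majority edge coloring with 4 colors; that is, there is an edge coloring of G with 4 colors such that for every vertex u with deg(u) ≥ 2 and every color α, at most half of the edges incident with u have color α. -/
/-
Induction on the number of edges. If some vertex `w` has degree at least 4, delete two edges
`wu`, `wv`, color the rest, and give the two edges distinct colors that are admissible at `u` and
`v` respectively: at any vertex at most two colors are inadmissible for a new edge, and `w`, which
keeps at least two edges, accepts two new edges of distinct colors. Once all degrees are at most 3,
the condition says exactly that the coloring is proper at every vertex, and a proper 4-edge-coloring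
of a subcubic graph is built the same way, deleting two edges at a vertex of degree 2 or 3. In the
one configuration where no admissible pair of colors exists, a Kempe swap on the component of `w`
frees a color at `w`.
-/

open SimpleGraph

/-- Almost majority edge coloring: the majority condition is required only at vertices of
degree at least 2. -/
def IsAlmostMajorityEdgeColoring {V : Type*} [Fintype V] [DecidableEq V]
    (G : SimpleGraph V) [DecidableRel G.Adj] {k : ℕ} (c : Sym2 V → Fin k) : Prop :=
  ∀ u : V, ∀ α : Fin k, 2 ≤ G.degree u →
    2 * ((G.neighborFinset u).filter (fun v => c s(u, v) = α)).card ≤ G.degree u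

open Finset

theorem Finset.sum_add_card_le_mul {ι : Type*} [Fintype ι] (d : ι → ℕ) (T : Finset ι) {k : ℕ}
    (hd : ∀ i, d i ≤ k) (hT : ∀ i ∈ T, d i + 1 ≤ k) : ∑ i, d i + #T ≤ k * Fintype.card ι := by
  classical
  calc ∑ i, d i + #T = ∑ i, (d i + if i ∈ T then 1 else 0) := by simp [sum_add_distrib]
    _ ≤ ∑ _i : ι, k := sum_le_sum fun i _ => by
        split_ifs with h <;> [exact hT i h; simpa using hd i]
    _ = k * Fintype.card ι := by simp [mul_comm]

theorem Finset.exists_ne_ne_or_mem {κ : Type*} [DecidableEq κ] {A B : Finset κ} (hA : 2 ≤ #A)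
    (hB : 2 ≤ #B) (γ : κ) :
    (∃ a ∈ A, ∃ b ∈ B, a ≠ b ∧ a ≠ γ ∧ b ≠ γ) ∨ (γ ∈ A ∧ γ ∈ B ∧ ∃ a ∈ A, a ∈ B ∧ a ≠ γ) := by
  obtain ⟨a, ha, haγ⟩ := A.exists_mem_ne hA γ
  obtain ⟨b, hb, hbγ⟩ := B.exists_mem_ne hB γ
  by_cases hab : a = b
  · subst hab
    by_cases hγA : γ ∈ A
    · by_cases hγB : γ ∈ B
      · exact .inr ⟨hγA, hγB, a, ha, hb, haγ⟩
      · obtain ⟨b', hb', hb'a⟩ := B.exists_mem_ne hB a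
        exact .inl ⟨a, ha, b', hb', hb'a.symm, haγ, fun h => hγB (h ▸ hb')⟩
    · obtain ⟨a', ha', ha'a⟩ := A.exists_mem_ne hA a
      exact .inl ⟨a', ha', a, hb, ha'a, fun h => hγA (h ▸ ha'), haγ⟩
  · exact .inl ⟨a, ha, b, hb, hab, haγ, hbγ⟩

/-- A connected component with `n` vertices has at least `n - 1` edges, so its degree sum is at
least `2n - 2`; with maximum degree 2 that leaves room for at most two vertices of degree `≤ 1`. -/
theorem SimpleGraph.not_reachable_of_degree_le {V : Type*} [Fintype V] {H : SimpleGraph V}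
    [DecidableRel H.Adj] (hH : ∀ z, H.degree z ≤ 2) {w u v : V} (hwu : w ≠ u) (hwv : w ≠ v)
    (huv : u ≠ v) (hw : H.degree w ≤ 1) (hu : H.degree u ≤ 1) (hv : H.degree v ≤ 1)
    (hu_reach : H.Reachable w u) : ¬ H.Reachable w v := by
  classical
  intro hv_reach
  set C := H.connectedComponentMk w
  have hmem {z : V} (hz : H.Reachable w z) : z ∈ C.supp := ConnectedComponent.eq.mpr hz.symm
  have hdeg : ∀ z : C.supp, (H.induce C.supp).degree z = H.degree z := fun z =>
    degree_induce_of_neighborSet_subset fun y hy => C.mem_supp_of_adj_mem_supp z.2 hy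
  have hedges : Nat.card C.supp ≤ Nat.card (H.induce C.supp).edgeSet + 1 :=
    C.connected_toSimpleGraph.card_vert_le_card_edgeSet_add_one
  have hsum := (H.induce C.supp).sum_degrees_eq_twice_card_edges
  let T : Finset C.supp := {⟨w, hmem (.refl w)⟩, ⟨u, hmem hu_reach⟩, ⟨v, hmem hv_reach⟩}
  have hT : #T = 3 := by
    rw [card_eq_three]
    exact ⟨_, _, _, by simpa using hwu, by simpa using hwv, by simpa using huv, rfl⟩
  have := Finset.sum_add_card_le_mul (fun z => (H.induce C.supp).degree z) T (k := 2)
    (fun z => (hdeg z).trans_le (hH z)) (by simp [T, hdeg, hw, hu, hv])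
  rw [edgeFinset_card, ← Nat.card_eq_fintype_card] at hsum
  rw [← Nat.card_eq_fintype_card] at this
  omega

namespace Multiset

variable {κ : Type*} [DecidableEq κ]

def IsAlmostMajority (s : Multiset κ) : Prop :=
  2 ≤ card s → ∀ a, 2 * s.count a ≤ card s

theorem IsAlmostMajority.cons_cons {s : Multiset κ} (hs : IsAlmostMajority s)
    (h2 : 2 ≤ card s) {a b : κ} (hab : a ≠ b) : IsAlmostMajority (a ::ₘ b ::ₘ s) := by
  intro _ x
  have := hs h2 x
  simp only [card_cons, count_cons]
  split_ifs with hxb hxa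
  · exact absurd (hxa.symm.trans hxb) hab
  all_goals omega

theorem IsAlmostMajority.exists_ne_cons [Fintype κ] (hκ : 4 ≤ Fintype.card κ)
    {s : Multiset κ} (hs : IsAlmostMajority s) (b : κ) : ∃ a ≠ b, IsAlmostMajority (a ::ₘ s) := by
  by_contra! hbad
  set B := univ.erase b
  have hB : ∀ a ∈ B, 1 ≤ card s ∧ card s ≤ 2 * s.count a := by
    intro a ha
    have := hbad a (ne_of_mem_erase ha)
    simp only [IsAlmostMajority, card_cons, count_cons, Classical.not_imp,
      not_forall] at this
    obtain ⟨_, x, hx⟩ := this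
    have := s.count_le_card x
    split_ifs at hx with hxa
    · subst hxa; omega
    · by_cases h2 : 2 ≤ card s
      · have := hs h2 x; omega
      · omega
  have hsum : ∑ a ∈ B, s.count a ≤ card s :=
    calc ∑ a ∈ B, s.count a ≤ ∑ a, s.count a := sum_le_sum_of_subset (subset_univ B)
      _ = card s := sum_count_eq_card fun a _ => mem_univ a
  have hlow : #B * card s ≤ 2 * ∑ a ∈ B, s.count a := by
    rw [mul_sum, card_eq_sum_ones, sum_mul]
    exact sum_le_sum fun a ha => by simpa using (hB a ha).2
  have hBcard : #B = Fintype.card κ - 1 := by simp [B]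
  obtain ⟨a, ha⟩ : B.Nonempty := Finset.card_pos.mp (by omega)
  have := (hB a ha).1
  have : 3 ≤ #B := by omega
  nlinarith

theorem isAlmostMajority_iff_nodup {s : Multiset κ} (hs : card s ≤ 3) :
    IsAlmostMajority s ↔ s.Nodup := by
  rw [nodup_iff_count_le_one]
  refine ⟨fun h a => ?_, fun h _ a => by have := h a; omega⟩
  have := s.count_le_card a
  by_cases h2 : 2 ≤ card s
  · have := h h2 a; omega
  · omega

omit [DecidableEq κ] in
theorem nodup_cons_cons_of_le_singleton {s : Multiset κ} {a b c : κ}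
    (hs : s ≤ {c}) (hab : a ≠ b) (hac : a ≠ c) (hbc : b ≠ c) : (a ::ₘ b ::ₘ s).Nodup :=
  nodup_of_le (cons_le_cons a (cons_le_cons b hs))
    (by simp [hab, hac, hbc])

theorem card_le_card_filter_notMem_add [Fintype κ] (s : Multiset κ) :
    Fintype.card κ ≤ #{a | a ∉ s} + card s :=
  calc Fintype.card κ ≤ #(({a | a ∉ s} : Finset κ) ∪ s.toFinset) :=
        Finset.card_le_card fun a _ => by by_cases h : a ∈ s <;> simp [h]
    _ ≤ #{a | a ∉ s} + #s.toFinset := Finset.card_union_le _ _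
    _ ≤ #{a | a ∉ s} + card s := by gcongr; exact toFinset_card_le s

end Multiset

namespace EdgeColoring

variable {V κ : Type*}

section colorsAt

variable [DecidableEq V]

def colorsAt (E : Finset (Sym2 V)) (c : Sym2 V → κ) (z : V) : Multiset κ :=
  {e ∈ E | z ∈ e}.val.map c

variable {E F : Finset (Sym2 V)} {c c' : Sym2 V → κ} {z : V}

@[simp] theorem card_colorsAt : Multiset.card (colorsAt E c z) = #{e ∈ E | z ∈ e} := by
  rw [colorsAt, Multiset.card_map]; rfl

theorem colorsAt_congr (h : ∀ e ∈ E, c e = c' e) (z : V) : colorsAt E c z = colorsAt E c' z :=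
  Multiset.map_congr rfl fun e he => h e (mem_filter.mp he).1

theorem colorsAt_eq_add_sdiff (hF : F ⊆ E) :
    colorsAt E c z = colorsAt F c z + colorsAt (E \ F) c z := by
  have hd : Disjoint {e ∈ F | z ∈ e} {e ∈ E \ F | z ∈ e} :=
    disjoint_filter_filter disjoint_sdiff
  rw [colorsAt, colorsAt, colorsAt, ← Multiset.map_add]
  change _ = Multiset.map c (disjUnion _ _ hd).val
  rw [disjUnion_eq_union, ← filter_union, union_sdiff_of_subset hF]

theorem colorsAt_pair {e f : Sym2 V} (hef : e ≠ f) :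
    colorsAt {e, f} c z = (if z ∈ e then {c e} else 0) + (if z ∈ f then {c f} else 0) := by
  rw [colorsAt, filter_insert, filter_singleton]
  split_ifs <;> simp [hef]

theorem count_colorsAt [DecidableEq κ] (a : κ) :
    (colorsAt E c z).count a = #{e ∈ E | z ∈ e ∧ c e = a} := by
  rw [colorsAt, Multiset.count_map, ← filter_val, filter_filter]
  simp only [eq_comm]; rfl

theorem colorsAt_edgeFinset [Fintype V] (G : SimpleGraph V) [DecidableRel G.Adj]
    (c : Sym2 V → κ) (u : V) :
    colorsAt G.edgeFinset c u = (G.neighborFinset u).val.map (fun v => c s(u, v)) := by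
  have : {e ∈ G.edgeFinset | u ∈ e} =
      (G.neighborFinset u).map ⟨fun v => s(u, v), fun _ _ => Sym2.congr_right.mp⟩ := by
    ext e
    induction e using Sym2.ind with
    | h x y =>
      simp only [mem_filter, mem_edgeFinset, mem_edgeSet, Sym2.mem_iff, mem_map,
        mem_neighborFinset]
      constructor
      · rintro ⟨hxy, rfl | rfl⟩
        exacts [⟨y, hxy, rfl⟩, ⟨x, hxy.symm, Sym2.eq_swap⟩]
      · rintro ⟨a, ha, he⟩
        rcases Sym2.eq_iff.mp he with ⟨rfl, rfl⟩ | ⟨rfl, rfl⟩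
        exacts [⟨ha, .inl rfl⟩, ⟨ha.symm, .inr rfl⟩]
  rw [colorsAt, this, map_val, Multiset.map_map]
  rfl

end colorsAt

section fork

variable [DecidableEq V] {E : Finset (Sym2 V)} {w u v : V}

theorem exists_fork (hE : ∀ e ∈ E, ¬ e.IsDiag) (hw : 2 ≤ #{e ∈ E | w ∈ e}) :
    ∃ u v, w ≠ u ∧ w ≠ v ∧ u ≠ v ∧ {s(w, u), s(w, v)} ⊆ E := by
  obtain ⟨e, he, f, hf, hef⟩ := one_lt_card.mp hw
  rw [mem_filter] at he hf
  obtain ⟨u, rfl⟩ := Sym2.mem_iff_exists.mp he.2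
  obtain ⟨v, rfl⟩ := Sym2.mem_iff_exists.mp hf.2
  refine ⟨u, v, fun h => hE _ he.1 (h ▸ Sym2.mk_isDiag_iff.mpr rfl),
    fun h => hE _ hf.1 (h ▸ Sym2.mk_isDiag_iff.mpr rfl), fun h => hef (h ▸ rfl),
    insert_subset he.1 (singleton_subset_iff.mpr hf.1)⟩

theorem colorsAt_fork (huv : u ≠ v) (hE : {s(w, u), s(w, v)} ⊆ E) (c : Sym2 V → κ) (z : V) :
    colorsAt E c z = (if z = w ∨ z = u then {c s(w, u)} else 0) +
      (if z = w ∨ z = v then {c s(w, v)} else 0) + colorsAt (E \ {s(w, u), s(w, v)}) c z := by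
  rw [colorsAt_eq_add_sdiff hE, colorsAt_pair (huv ∘ Sym2.congr_right.mp)]
  simp only [Sym2.mem_iff]

theorem colorsAt_fork_center (huv : u ≠ v) (hE : {s(w, u), s(w, v)} ⊆ E) (c : Sym2 V → κ) :
    colorsAt E c w = c s(w, u) ::ₘ c s(w, v) ::ₘ colorsAt (E \ {s(w, u), s(w, v)}) c w := by
  simp [colorsAt_fork huv hE c w, Multiset.singleton_add]

theorem colorsAt_fork_left (hwu : w ≠ u) (huv : u ≠ v) (hE : {s(w, u), s(w, v)} ⊆ E)
    (c : Sym2 V → κ) : colorsAt E c u = c s(w, u) ::ₘ colorsAt (E \ {s(w, u), s(w, v)}) c u := by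
  simp [colorsAt_fork huv hE c u, hwu.symm, huv, Multiset.singleton_add]

theorem colorsAt_fork_right (hwv : w ≠ v) (huv : u ≠ v) (hE : {s(w, u), s(w, v)} ⊆ E)
    (c : Sym2 V → κ) : colorsAt E c v = c s(w, v) ::ₘ colorsAt (E \ {s(w, u), s(w, v)}) c v := by
  simp [colorsAt_fork huv hE c v, hwv.symm, huv.symm, Multiset.singleton_add]

theorem exists_colorsAt_of_fork {P : Multiset κ → Prop} {c : Sym2 V → κ} {α β : κ}
    (huv : u ≠ v) (hE : {s(w, u), s(w, v)} ⊆ E)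
    (hc : ∀ z, P (colorsAt (E \ {s(w, u), s(w, v)}) c z))
    (hw : P (α ::ₘ β ::ₘ colorsAt (E \ {s(w, u), s(w, v)}) c w))
    (hu : P (α ::ₘ colorsAt (E \ {s(w, u), s(w, v)}) c u))
    (hv : P (β ::ₘ colorsAt (E \ {s(w, u), s(w, v)}) c v)) :
    ∃ c' : Sym2 V → κ, ∀ z, P (colorsAt E c' z) := by
  have hef : s(w, u) ≠ s(w, v) := huv ∘ Sym2.congr_right.mp
  refine ⟨Function.update (Function.update c s(w, v) β) s(w, u) α, fun z => ?_⟩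
  rw [colorsAt_fork huv hE, colorsAt_congr (c' := c) fun e he => by
    obtain ⟨-, he'⟩ := mem_sdiff.mp he
    simp only [mem_insert, mem_singleton, not_or] at he'
    rw [Function.update_of_ne he'.1, Function.update_of_ne he'.2]]
  simp only [Function.update_self, Function.update_of_ne hef.symm]
  by_cases hzw : z = w
  · subst hzw; simpa [Multiset.singleton_add] using hw
  by_cases hzu : z = u
  · subst hzu; simpa [hzw, huv, Multiset.singleton_add] using hu
  by_cases hzv : z = v
  · subst hzv; simpa [hzw, huv.symm, Multiset.singleton_add] using hv
  simpa [hzw, hzu, hzv] using hc z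

end fork

section kempe

variable (E : Finset (Sym2 V)) (c : Sym2 V → κ) (a b : κ)

def kempeGraph : SimpleGraph V :=
  SimpleGraph.fromEdgeSet {e | e ∈ E ∧ (c e = a ∨ c e = b)}

variable [DecidableEq κ]

open Classical in
noncomputable def kempeSwap (S : Set V) (e : Sym2 V) : κ :=
  if ∃ z ∈ e, z ∈ S then Equiv.swap a b (c e) else c e

variable {E c a b} [DecidableEq V]

theorem degree_kempeGraph_le [Fintype V] [DecidableRel (kempeGraph E c a b).Adj] (z : V) :
    (kempeGraph E c a b).degree z ≤ (colorsAt E c z).count a + (colorsAt E c z).count b := by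
  rw [count_colorsAt, count_colorsAt, ← SimpleGraph.card_neighborFinset_eq_degree]
  calc #((kempeGraph E c a b).neighborFinset z)
      ≤ #({e ∈ E | z ∈ e ∧ c e = a} ∪ {e ∈ E | z ∈ e ∧ c e = b}) := by
        refine card_le_card_of_injOn (fun y => s(z, y)) (fun y hy => ?_)
          (fun y₁ _ y₂ _ h => Sym2.congr_right.mp h)
        rw [mem_coe, SimpleGraph.mem_neighborFinset, kempeGraph,
          SimpleGraph.fromEdgeSet_adj] at hy
        obtain ⟨⟨hyE, hyc⟩, -⟩ := hy
        simp only [coe_union, coe_filter, Set.mem_union]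
        exact hyc.imp (fun h => ⟨hyE, Sym2.mem_mk_left _ _, h⟩)
          (fun h => ⟨hyE, Sym2.mem_mk_left _ _, h⟩)
    _ ≤ _ := card_union_le _ _

theorem colorsAt_kempeSwap_of_mem {S : Set V} {z : V} (hz : z ∈ S) :
    colorsAt E (kempeSwap c a b S) z = (colorsAt E c z).map (Equiv.swap a b) := by
  rw [colorsAt, colorsAt, Multiset.map_map]
  refine Multiset.map_congr rfl fun e he => ?_
  rw [Function.comp_apply, kempeSwap, if_pos ⟨z, (mem_filter.mp he).2, hz⟩]

theorem colorsAt_kempeSwap_of_notMem {S : Set V}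
    (hS : ∀ y ∈ S, ∀ z, (kempeGraph E c a b).Adj y z → z ∈ S) {z : V} (hz : z ∉ S) :
    colorsAt E (kempeSwap c a b S) z = colorsAt E c z := by
  refine Multiset.map_congr rfl fun e he => ?_
  obtain ⟨heE, hze⟩ := mem_filter.mp he
  rw [kempeSwap]
  split_ifs with h
  · obtain ⟨y, hye, hyS⟩ := h
    have hyz : y ≠ z := fun h => hz (h ▸ hyS)
    have hey : e = s(y, z) := (Sym2.mem_and_mem_iff hyz).mp ⟨hye, hze⟩
    have hadj (hc : c e = a ∨ c e = b) : (kempeGraph E c a b).Adj y z := by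
      rw [kempeGraph, SimpleGraph.fromEdgeSet_adj]
      exact ⟨⟨hey ▸ heE, hey ▸ hc⟩, hyz⟩
    exact Equiv.swap_apply_of_ne_of_ne (fun hca => hz (hS y hyS z (hadj (.inl hca))))
      (fun hcb => hz (hS y hyS z (hadj (.inr hcb))))
  · rfl

end kempe

section subcubic

variable [DecidableEq V] [Fintype V] [DecidableEq κ] {E : Finset (Sym2 V)} {c : Sym2 V → κ}
  {w u v : V}

/-- In the `(γ, b)`-Kempe graph the vertices `w`, `u`, `v` have degree at most 1, so the component
of `w` misses `u` or `v`. Swapping `γ` and `b` on that component frees `γ` at `w` and keeps it free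
at the missed vertex, whose new edge then gets `γ` while the other new edge gets `α`. -/
theorem exists_nodup_colorsAt_of_kempe {α γ b : κ} (hwu : w ≠ u) (hwv : w ≠ v) (huv : u ≠ v)
    (hE : {s(w, u), s(w, v)} ⊆ E) (hc : ∀ z, (colorsAt (E \ {s(w, u), s(w, v)}) c z).Nodup)
    (hw : colorsAt (E \ {s(w, u), s(w, v)}) c w ≤ {γ})
    (hαγ : α ≠ γ) (hbα : b ≠ α) (hbγ : b ≠ γ)
    (hαu : α ∉ colorsAt (E \ {s(w, u), s(w, v)}) c u)
    (hαv : α ∉ colorsAt (E \ {s(w, u), s(w, v)}) c v)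
    (hγu : γ ∉ colorsAt (E \ {s(w, u), s(w, v)}) c u)
    (hγv : γ ∉ colorsAt (E \ {s(w, u), s(w, v)}) c v) :
    ∃ c' : Sym2 V → κ, ∀ z, (colorsAt E c' z).Nodup := by
  classical
  set E' := E \ {s(w, u), s(w, v)}
  set K := kempeGraph E' c γ b
  have hcount (z : V) (x : κ) : (colorsAt E' c z).count x ≤ 1 :=
    Multiset.nodup_iff_count_le_one.mp (hc z) x
  have hK (z : V) : K.degree z ≤ 2 :=
    (degree_kempeGraph_le z).trans (add_le_add (hcount z γ) (hcount z b))
  have hKw : K.degree w ≤ 1 := by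
    have hb : (colorsAt E' c w).count b = 0 :=
      Nat.le_zero.mp ((Multiset.count_le_of_le b hw).trans_eq (by simp [hbγ]))
    have := degree_kempeGraph_le (E := E') (c := c) (a := γ) (b := b) w
    rw [hb, add_zero] at this
    exact this.trans (hcount w γ)
  have hKu : K.degree u ≤ 1 := by
    have := degree_kempeGraph_le (E := E') (c := c) (a := γ) (b := b) u
    rw [Multiset.count_eq_zero.mpr hγu, zero_add] at this
    exact this.trans (hcount u b)
  have hKv : K.degree v ≤ 1 := by
    have := degree_kempeGraph_le (E := E') (c := c) (a := γ) (b := b) v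
    rw [Multiset.count_eq_zero.mpr hγv, zero_add] at this
    exact this.trans (hcount v b)
  set S := {z | K.Reachable w z}
  have hS : ∀ y ∈ S, ∀ z, K.Adj y z → z ∈ S := fun y hy z hyz => hy.trans hyz.reachable
  set c' := kempeSwap c γ b S
  have hc' (z : V) : (colorsAt E' c' z).Nodup := by
    by_cases hz : z ∈ S
    · rw [colorsAt_kempeSwap_of_mem hz]; exact (hc z).map (Equiv.injective _)
    · rw [colorsAt_kempeSwap_of_notMem hS hz]; exact hc z
  have hw' : colorsAt E' c' w ≤ {b} := by
    rw [colorsAt_kempeSwap_of_mem (S := S) (Reachable.refl w)]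
    simpa using Multiset.map_le_map (f := Equiv.swap γ b) hw
  have hα' (z : V) (hz : α ∉ colorsAt E' c z) : α ∉ colorsAt E' c' z := by
    by_cases hzS : z ∈ S
    · rw [colorsAt_kempeSwap_of_mem hzS, Multiset.mem_map]
      rintro ⟨x, hx, hxα⟩
      rw [Equiv.swap_apply_eq_iff, Equiv.swap_apply_of_ne_of_ne hαγ hbα.symm] at hxα
      exact hz (hxα ▸ hx)
    · rwa [colorsAt_kempeSwap_of_notMem hS hzS]
  by_cases hu : K.Reachable w u
  · have hv := not_reachable_of_degree_le hK hwu hwv huv hKw hKu hKv hu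
    refine exists_colorsAt_of_fork huv hE hc'
      (Multiset.nodup_cons_cons_of_le_singleton hw' hαγ hbα.symm hbγ.symm)
      (Multiset.nodup_cons.mpr ⟨hα' u hαu, hc' u⟩) (Multiset.nodup_cons.mpr ⟨?_, hc' v⟩)
    rwa [colorsAt_kempeSwap_of_notMem hS hv]
  · refine exists_colorsAt_of_fork huv hE hc'
      (Multiset.nodup_cons_cons_of_le_singleton hw' hαγ.symm hbγ.symm hbα.symm)
      (Multiset.nodup_cons.mpr ⟨?_, hc' u⟩) (Multiset.nodup_cons.mpr ⟨hα' v hαv, hc' v⟩)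
    rwa [colorsAt_kempeSwap_of_notMem hS hu]

theorem exists_nodup_colorsAt_of_fork [Fintype κ] (hκ : 4 ≤ Fintype.card κ) (hwu : w ≠ u)
    (hwv : w ≠ v) (huv : u ≠ v) (hE : {s(w, u), s(w, v)} ⊆ E)
    (hdeg : ∀ z, #{e ∈ E | z ∈ e} ≤ 3)
    (hc : ∀ z, (colorsAt (E \ {s(w, u), s(w, v)}) c z).Nodup) :
    ∃ c' : Sym2 V → κ, ∀ z, (colorsAt E c' z).Nodup := by
  have hcard (z : V) := (card_colorsAt (c := c)).trans_le (hdeg z)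
  have hw : Multiset.card (colorsAt (E \ {s(w, u), s(w, v)}) c w) ≤ 1 := by
    have := hcard w
    rw [colorsAt_fork_center huv hE, Multiset.card_cons, Multiset.card_cons] at this
    omega
  have hu : Multiset.card (colorsAt (E \ {s(w, u), s(w, v)}) c u) ≤ 2 := by
    have := hcard u
    rw [colorsAt_fork_left hwu huv hE, Multiset.card_cons] at this
    omega
  have hv : Multiset.card (colorsAt (E \ {s(w, u), s(w, v)}) c v) ≤ 2 := by
    have := hcard v
    rw [colorsAt_fork_right hwv huv hE, Multiset.card_cons] at this
    omega
  set E' := E \ {s(w, u), s(w, v)}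
  obtain ⟨γ, hγ⟩ : ∃ γ, colorsAt E' c w ≤ {γ} := by
    rcases Nat.le_one_iff_eq_zero_or_eq_one.mp hw with h | h
    · obtain ⟨γ⟩ : Nonempty κ := Fintype.card_pos_iff.mp (by omega)
      exact ⟨γ, by simp [Multiset.card_eq_zero.mp h]⟩
    · obtain ⟨γ, hγ⟩ := Multiset.card_eq_one.mp h
      exact ⟨γ, hγ.le⟩
  have hA := (colorsAt E' c u).card_le_card_filter_notMem_add
  have hB := (colorsAt E' c v).card_le_card_filter_notMem_add
  rcases exists_ne_ne_or_mem (A := {x | x ∉ colorsAt E' c u}) (B := {x | x ∉ colorsAt E' c v})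
      (by omega) (by omega) γ with
    ⟨α, hα, β, hβ, hαβ, hαγ, hβγ⟩ | ⟨hγu, hγv, α, hαu, hαv, hαγ⟩
  · simp only [mem_filter, mem_univ, true_and] at hα hβ
    exact exists_colorsAt_of_fork huv hE hc
      (Multiset.nodup_cons_cons_of_le_singleton hγ hαβ hαγ hβγ)
      (Multiset.nodup_cons.mpr ⟨hα, hc u⟩) (Multiset.nodup_cons.mpr ⟨hβ, hc v⟩)
  · simp only [mem_filter, mem_univ, true_and] at hγu hγv hαu hαv
    obtain ⟨b, -, hb⟩ := exists_mem_notMem_of_card_lt_card (s := {α, γ}) (t := univ)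
      (by rw [card_univ]; exact (card_le_two).trans_lt (by omega))
    simp only [mem_insert, mem_singleton, not_or] at hb
    exact exists_nodup_colorsAt_of_kempe hwu hwv huv hE hc hγ hαγ hb.1 hb.2 hαu hαv hγu hγv

end subcubic

section existence

variable [DecidableEq V] [Fintype V] [DecidableEq κ] [Fintype κ]

theorem exists_nodup_colorsAt (hκ : 4 ≤ Fintype.card κ) (E : Finset (Sym2 V))
    (hE : ∀ e ∈ E, ¬ e.IsDiag) (hdeg : ∀ z, #{e ∈ E | z ∈ e} ≤ 3) :
    ∃ c : Sym2 V → κ, ∀ z, (colorsAt E c z).Nodup := by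
  induction E using Finset.strongInduction with
  | H E ih =>
  by_cases h2 : ∃ w, 2 ≤ #{e ∈ E | w ∈ e}
  · obtain ⟨w, hw⟩ := h2
    obtain ⟨u, v, hwu, hwv, huv, hsub⟩ := exists_fork hE hw
    obtain ⟨c, hc⟩ := ih _ (sdiff_ssubset hsub (insert_nonempty _ _))
      (fun e he => hE e (mem_sdiff.mp he).1)
      (fun z => (card_le_card (filter_subset_filter _ sdiff_subset)).trans (hdeg z))
    exact exists_nodup_colorsAt_of_fork hκ hwu hwv huv hsub hdeg hc
  · push Not at h2
    obtain ⟨b⟩ : Nonempty κ := Fintype.card_pos_iff.mp (by omega)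
    refine ⟨fun _ => b, fun z => Multiset.nodup_iff_count_le_one.mpr fun a => ?_⟩
    exact (Multiset.count_le_card a _).trans (by rw [card_colorsAt]; exact Nat.le_of_lt_succ (h2 z))

theorem exists_isAlmostMajority_colorsAt (hκ : 4 ≤ Fintype.card κ) (E : Finset (Sym2 V))
    (hE : ∀ e ∈ E, ¬ e.IsDiag) : ∃ c : Sym2 V → κ, ∀ z, (colorsAt E c z).IsAlmostMajority := by
  induction E using Finset.strongInduction with
  | H E ih =>
  by_cases h4 : ∃ w, 4 ≤ #{e ∈ E | w ∈ e}
  · obtain ⟨w, hw⟩ := h4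
    obtain ⟨u, v, hwu, hwv, huv, hsub⟩ := exists_fork hE (le_trans (by norm_num) hw)
    obtain ⟨c, hc⟩ := ih _ (sdiff_ssubset hsub (insert_nonempty _ _))
      (fun e he => hE e (mem_sdiff.mp he).1)
    have hcw : 2 ≤ Multiset.card (colorsAt (E \ {s(w, u), s(w, v)}) c w) := by
      rw [← card_colorsAt (c := c), colorsAt_fork_center huv hsub, Multiset.card_cons,
        Multiset.card_cons] at hw
      omega
    obtain ⟨b⟩ : Nonempty κ := Fintype.card_pos_iff.mp (by omega)
    obtain ⟨β, -, hβ⟩ := (hc v).exists_ne_cons hκ b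
    obtain ⟨α, hαβ, hα⟩ := (hc u).exists_ne_cons hκ β
    exact exists_colorsAt_of_fork huv hsub hc ((hc w).cons_cons hcw hαβ) hα hβ
  · push Not at h4
    obtain ⟨c, hc⟩ := exists_nodup_colorsAt hκ E hE fun z => Nat.le_of_lt_succ (h4 z)
    refine ⟨c, fun z => (Multiset.isAlmostMajority_iff_nodup ?_).mpr (hc z)⟩
    rw [card_colorsAt]
    exact Nat.le_of_lt_succ (h4 z)

end existence

end EdgeColoring

open EdgeColoring

theorem isAlmostMajorityEdgeColoring_iff {V : Type*} [Fintype V] [DecidableEq V]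
    (G : SimpleGraph V) [DecidableRel G.Adj] {k : ℕ} (c : Sym2 V → Fin k) :
    IsAlmostMajorityEdgeColoring G c ↔ ∀ u, (colorsAt G.edgeFinset c u).IsAlmostMajority := by
  simp only [IsAlmostMajorityEdgeColoring, Multiset.IsAlmostMajority, colorsAt_edgeFinset,
    Multiset.card_map, Multiset.count_map, card_val, card_neighborFinset_eq_degree]
  simp only [← filter_val, card_val, @eq_comm (Fin k)]
  exact ⟨fun h u h2 a => h u a h2, fun h u a h2 => h u h2 a⟩

/-- Every finite simple graph has an almost majority edge coloring with 4 colors. -/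
theorem almost_majority_four_colors {V : Type*} [Fintype V] [DecidableEq V]
    (G : SimpleGraph V) [DecidableRel G.Adj] :
    ∃ c : Sym2 V → Fin 4, IsAlmostMajorityEdgeColoring G c := by
  obtain ⟨c, hc⟩ := exists_isAlmostMajority_colorsAt (κ := Fin 4) (by simp) G.edgeFinset
    fun e he => G.not_isDiag_of_mem_edgeSet (mem_edgeFinset.mp he)
  exact ⟨c, (isAlmostMajorityEdgeColoring_iff G c).mpr hc⟩
end

section
/- Let G be a finite simple graph with minimum degree at least 2 and let H be a connected spanning subgraph of G equipped with an edge coloring with a colors such that for every vertex v of H and every color α, twice the number of edges of H incident with v having color α is at most the degree of v in G. Suppose the graph G − H (on the same vertex set, with edge set E(G) \ E(H)) admits a weak majority edge coloring with b colors. Then the coloring of E(G) obtained by using the a colors on E(H) and b new colors on E(G) \ E(H) is a majority edge coloring of G with a + b colors; in particular G has a majority edge coloring with a + b colors. -/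
/-!
The colors of `H` and of `G - H` are disjoint, so each color class at a vertex `u` lives entirely
in `H` or entirely in `G - H`. A color of `H` appears at most `deg_G(u)/2` times by assumption.
A color of `G - H` appears at most `⌈deg_{G-H}(u)/2⌉` times, and since `H` is connected and spanning,
`u` has an `H`-edge (unless `u` is isolated in `G`), so `deg_{G-H}(u) + 1 ≤ deg_G(u)`.
-/

open SimpleGraph

/-- Majority edge coloring. -/
def IsMajorityEdgeColoring {V : Type*} [Fintype V] [DecidableEq V]
    (G : SimpleGraph V) [DecidableRel G.Adj] {k : ℕ} (c : Sym2 V → Fin k) : Prop :=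
  ∀ u : V, ∀ α : Fin k,
    2 * ((G.neighborFinset u).filter (fun v => c s(u, v) = α)).card ≤ G.degree u

namespace SimpleGraph

theorem Connected.degree_pos_of_adj {V : Type*} {G H : SimpleGraph V} (hH : H.Connected)
    {u v : V} [Fintype (H.neighborSet u)] (huv : G.Adj u v) : 0 < H.degree u :=
  (hH u v).degree_pos_left huv.ne

variable {V : Type*} [Fintype V] {G H : SimpleGraph V} [DecidableRel G.Adj] [DecidableRel H.Adj]

theorem degree_sdiff_add_degree [DecidableEq V] (hle : H ≤ G) (u : V) :
    (G \ H).degree u + H.degree u = G.degree u := by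
  unfold degree
  rw [neighborFinset_sdiff, Finset.card_sdiff_add_card_eq_card]
  intro v
  simpa only [mem_neighborFinset] using @hle u v

variable {a b : ℕ} {cH : Sym2 V → Fin a} {cK : Sym2 V → Fin b} {c : Sym2 V → Fin (a + b)}

theorem card_filter_castAdd_le
    (hcEq₁ : ∀ u v : V, H.Adj u v → c s(u, v) = Fin.castAdd b (cH s(u, v)))
    (hcEq₂ : ∀ u v : V, G.Adj u v → ¬ H.Adj u v → c s(u, v) = Fin.natAdd a (cK s(u, v)))
    (u : V) (α : Fin a) :
    ((G.neighborFinset u).filter (fun v => c s(u, v) = Fin.castAdd b α)).card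
      ≤ ((H.neighborFinset u).filter (fun v => cH s(u, v) = α)).card := by
  refine Finset.card_le_card fun v hv => ?_
  simp only [Finset.mem_filter, mem_neighborFinset] at hv ⊢
  obtain ⟨hG, hc⟩ := hv
  by_cases hH : H.Adj u v
  · exact ⟨hH, Fin.castAdd_injective a b (by rw [← hcEq₁ u v hH, hc])⟩
  · rw [hcEq₂ u v hG hH, Fin.ext_iff] at hc
    simp only [Fin.val_natAdd, Fin.val_castAdd] at hc
    omega

theorem card_filter_natAdd_le
    (hcEq₁ : ∀ u v : V, H.Adj u v → c s(u, v) = Fin.castAdd b (cH s(u, v)))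
    (hcEq₂ : ∀ u v : V, G.Adj u v → ¬ H.Adj u v → c s(u, v) = Fin.natAdd a (cK s(u, v)))
    (u : V) (β : Fin b) :
    ((G.neighborFinset u).filter (fun v => c s(u, v) = Fin.natAdd a β)).card
      ≤ (((G \ H).neighborFinset u).filter (fun v => cK s(u, v) = β)).card := by
  refine Finset.card_le_card fun v hv => ?_
  simp only [Finset.mem_filter, mem_neighborFinset, sdiff_adj] at hv ⊢
  obtain ⟨hG, hc⟩ := hv
  by_cases hH : H.Adj u v
  · rw [hcEq₁ u v hH, Fin.ext_iff] at hc
    simp only [Fin.val_natAdd, Fin.val_castAdd] at hc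
    omega
  · exact ⟨⟨hG, hH⟩, Fin.natAdd_injective b a (by rw [← hcEq₂ u v hG hH, hc])⟩

end SimpleGraph

theorem majority_of_combined_coloring_general {V : Type*} [Fintype V] [DecidableEq V]
    (G H : SimpleGraph V) [DecidableRel G.Adj] [DecidableRel H.Adj]
    (hsub : H ≤ G) (hHconn : H.Connected)
    {a b : ℕ} (cH : Sym2 V → Fin a)
    (hcH : ∀ v : V, ∀ α : Fin a,
      2 * ((H.neighborFinset v).filter (fun u => cH s(v, u) = α)).card ≤ G.degree v)
    (cK : Sym2 V → Fin b)
    (hcK : ∀ v : V, ∀ β : Fin b,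
      (((G \ H).neighborFinset v).filter (fun u => cK s(v, u) = β)).card
        ≤ ((G \ H).degree v + 1) / 2)
    (c : Sym2 V → Fin (a + b))
    (hcEq₁ : ∀ u v : V, H.Adj u v → c s(u, v) = Fin.castAdd b (cH s(u, v)))
    (hcEq₂ : ∀ u v : V, G.Adj u v → ¬ H.Adj u v → c s(u, v) = Fin.natAdd a (cK s(u, v))) :
    IsMajorityEdgeColoring G c := by
  intro u α
  refine Fin.addCases (fun α => ?_) (fun β => ?_) α
  · exact (Nat.mul_le_mul_left 2 (card_filter_castAdd_le hcEq₁ hcEq₂ u α)).trans (hcH u α)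
  · have hβ := (card_filter_natAdd_le hcEq₁ hcEq₂ u β).trans (hcK u β)
    have hdeg := degree_sdiff_add_degree hsub u
    have hK : (((G \ H).neighborFinset u).filter (fun v => cK s(u, v) = β)).card
        ≤ (G \ H).degree u := Finset.card_filter_le _ _
    have hH : G.degree u = 0 ∨ 0 < H.degree u := by
      rcases Nat.eq_zero_or_pos (G.degree u) with h | h
      · exact Or.inl h
      · obtain ⟨v, huv⟩ := (G.degree_pos_iff_exists_adj u).mp h
        exact Or.inr (hHconn.degree_pos_of_adj huv)
    omega

/-- Let `G` have minimum degree at least 2, and let `H` be a connected spanning subgraph of `G`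
with an `a`-edge-coloring `cH` such that every color appears at each vertex `v` on at most
`deg_G(v)/2` edges of `H`. If `G - H` has a weak majority edge coloring `cK` with `b` colors,
then the combined coloring (using the `a` colors on `E(H)` and `b` new colors on
`E(G) \ E(H)`) is a majority edge coloring of `G` with `a + b` colors. -/
theorem majority_of_combined_coloring {V : Type*} [Fintype V] [DecidableEq V]
    (G H : SimpleGraph V) [DecidableRel G.Adj] [DecidableRel H.Adj]
    (hsub : H ≤ G) (hδ : ∀ v : V, 2 ≤ G.degree v) (hHconn : H.Connected)
    {a b : ℕ} (cH : Sym2 V → Fin a)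
    (hcH : ∀ v : V, ∀ α : Fin a,
      2 * ((H.neighborFinset v).filter (fun u => cH s(v, u) = α)).card ≤ G.degree v)
    (cK : Sym2 V → Fin b)
    (hcK : ∀ v : V, ∀ β : Fin b,
      (((G \ H).neighborFinset v).filter (fun u => cK s(v, u) = β)).card
        ≤ ((G \ H).degree v + 1) / 2)
    (c : Sym2 V → Fin (a + b))
    (hcEq₁ : ∀ u v : V, H.Adj u v → c s(u, v) = Fin.castAdd b (cH s(u, v)))
    (hcEq₂ : ∀ u v : V, G.Adj u v → ¬ H.Adj u v → c s(u, v) = Fin.natAdd a (cK s(u, v))) :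
    IsMajorityEdgeColoring G c :=
  majority_of_combined_coloring_general G H hsub hHconn cH hcH cK hcK c hcEq₁ hcEq₂
end

section
/- For every natural number n ≥ 3 with n ≠ 4, the complete graph K_n satisfies M'_D(K_n) ≤ 3; that is, K_n has an edge coloring with 3 colors that is both a majority edge coloring and a distinguishing edge coloring. -/
/-!
For `n ≥ 5`, colour the path `0 - 1 - ⋯ - (n - 1)` with colour `0`, the chord `{a, a + 2}` with
colour `2`, and every other edge `{x, y}` with colour `1` or `2` according to the parity of
`x + y`. A colour-preserving automorphism preserves the path, so it is the identity or the
reflection `x ↦ n - 1 - x`; the reflection sends the chord to a non-adjacent pair of even sum,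
which has colour `1`, unless `n = 2a + 3`. We take `a = 1` for `n ≥ 6` and `a = 0` for `n = 5`.
For the majority condition at a vertex `u`, moving a neighbour one step towards `u` flips the
parity of the sum, which injects each of the colour classes `1` and `2` into its complement.
For `n = 5` the majority condition, and for `n = 3` (a rainbow triangle) both conditions, are
checked by computation.
-/

open SimpleGraph

/-- Distinguishing edge coloring. -/
def IsDistinguishingEdgeColoring {V : Type*} (G : SimpleGraph V) {k : ℕ}
    (c : Sym2 V → Fin k) : Prop :=
  ∀ φ : G ≃g G, (∀ u v : V, G.Adj u v → c s(φ u, φ v) = c s(u, v)) → ∀ x : V, φ x = x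

open Finset

theorem Finset.two_mul_card_filter_le_of_injOn {α : Type*} {s : Finset α} {p : α → Prop}
    [DecidablePred p] (g : α → α) (hg : ∀ x ∈ s, p x → g x ∈ s ∧ ¬p (g x))
    (hinj : Set.InjOn g (s.filter p)) : 2 * #(s.filter p) ≤ #s := by
  have hle : #(s.filter p) ≤ #(s.filter (¬p ·)) :=
    card_le_card_of_injOn g (fun x hx => by
      rw [coe_filter] at hx
      simpa using hg x hx.1 hx.2) hinj
  have := card_filter_add_card_filter_not (s := s) p
  omega

theorem SimpleGraph.pathGraph.eq_id_or_eq_rev {n : ℕ} (f : pathGraph n →g pathGraph n)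
    (hf : Function.Injective f) : ⇑f = id ∨ ⇑f = Fin.rev := by
  rcases Nat.lt_or_ge n 2 with hn | hn
  · have : Subsingleton (Fin n) := Fin.subsingleton_iff_le_one.2 (by omega)
    exact Or.inl (funext fun _ => Subsingleton.elim _ _)
  set d : ℤ := (f ⟨1, hn⟩ : ℤ) - f ⟨0, by omega⟩
  have hd : d = 1 ∨ d = -1 := by
    have := pathGraph_adj.1 (f.map_adj (pathGraph_adj.2 (Or.inl rfl) :
      (pathGraph n).Adj ⟨0, by omega⟩ ⟨1, hn⟩))
    omega
  -- an injective walk along the path never turns back, so all its steps equal `d`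
  have hval : ∀ k (hk : k < n), ((f ⟨k, hk⟩ : ℕ) : ℤ) = f ⟨0, by omega⟩ + k * d := by
    intro k
    induction k using Nat.twoStepInduction with
    | zero => simp
    | one => simp [d]
    | more k h0 h1 =>
      intro hk
      have hadj := pathGraph_adj.1 (f.map_adj (pathGraph_adj.2 (Or.inl rfl) :
        (pathGraph n).Adj ⟨k + 1, by omega⟩ ⟨k + 2, hk⟩))
      have hne : (f ⟨k + 2, hk⟩ : ℕ) ≠ f ⟨k, by omega⟩ :=
        Fin.val_ne_of_ne (hf.ne (by simp))
      specialize h0 (by omega)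
      specialize h1 (by omega)
      push_cast at h0 h1 ⊢
      rcases hd with hd | hd <;> simp only [hd] at h0 h1 ⊢ <;> omega
  have hx : ∀ x : Fin n, ((f x : ℕ) : ℤ) = f ⟨0, by omega⟩ + x * d := fun x => hval x x.isLt
  have hlast := hval (n - 1) (by omega)
  have hlt := (f ⟨n - 1, by omega⟩).isLt
  have hlt0 := (f ⟨0, by omega⟩).isLt
  rcases hd with hd | hd
  · left; funext x; ext
    have := hx x
    simp only [hd, id] at this hlast ⊢
    omega
  · right; funext x; ext
    have := hx x
    simp only [hd, Fin.val_rev] at this hlast ⊢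
    omega

theorem isDistinguishingEdgeColoring_top_of_perm {V : Type*} {k : ℕ} {c : Sym2 V → Fin k}
    (h : ∀ σ : Equiv.Perm V, (∀ u v, u ≠ v → c s(σ u, σ v) = c s(u, v)) → σ = 1) :
    IsDistinguishingEdgeColoring ⊤ c := fun φ hφ x =>
  Equiv.ext_iff.1 (h φ.toEquiv fun u v huv => hφ u v ((top_adj u v).2 huv)) x

theorem isDistinguishingEdgeColoring_top_of_pathGraph {n k : ℕ} {c : Sym2 (Fin n) → Fin k}
    {α : Fin k} (hα : ∀ u v, u ≠ v → (c s(u, v) = α ↔ (pathGraph n).Adj u v))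
    (hrev : ∃ u v, u ≠ v ∧ c s(u.rev, v.rev) ≠ c s(u, v)) :
    IsDistinguishingEdgeColoring ⊤ c := by
  refine isDistinguishingEdgeColoring_top_of_perm fun σ hσ => ?_
  let f : pathGraph n →g pathGraph n :=
    ⟨σ, fun {u v} huv => by
      refine (hα _ _ (σ.injective.ne huv.ne)).1 ?_
      rw [hσ u v huv.ne]
      exact (hα u v huv.ne).2 huv⟩
  rcases pathGraph.eq_id_or_eq_rev f σ.injective with h | h
  · exact Equiv.ext (congrFun h)
  · obtain ⟨u, v, huv, hc⟩ := hrev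
    exact absurd (hσ u v huv) (by simpa [f, funext_iff] using h ▸ hc)

def pathParityColor (a x y : ℕ) : Fin 3 :=
  if x + 1 = y ∨ y + 1 = x then 0
  else if x = a ∧ y = a + 2 ∨ y = a ∧ x = a + 2 then 2
  else if (x + y) % 2 = 0 then 1 else 2

namespace pathParityColor

theorem comm (a x y : ℕ) : pathParityColor a x y = pathParityColor a y x := by
  unfold pathParityColor; split_ifs <;> first | rfl | omega

theorem eq_zero_iff {a x y : ℕ} : pathParityColor a x y = 0 ↔ x + 1 = y ∨ y + 1 = x := by
  unfold pathParityColor; split_ifs <;> simp_all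

theorem rev_ne {n a : ℕ} (ha : a + 2 < n) (hn : 2 * a + 3 ≠ n) :
    pathParityColor a (n - (a + 1)) (n - (a + 2 + 1)) ≠ pathParityColor a a (a + 2) := by
  have h2 : pathParityColor a a (a + 2) = 2 := by
    unfold pathParityColor; rw [if_neg (by omega), if_pos (by omega)]
  have h1 : pathParityColor a (n - (a + 1)) (n - (a + 2 + 1)) = 1 := by
    unfold pathParityColor; rw [if_neg (by omega), if_neg (by omega), if_pos (by omega)]
  rw [h1, h2]; decide

-- One step from `v` towards `u`, except for the two steps that would land on the chord `{1, 3}`.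
def partner (u v : ℕ) : ℕ :=
  if u = 1 ∧ v = 4 then 0 else if u = 3 ∧ v = 0 then 4 else if v < u then v + 1 else v - 1

theorem partner_lt {n u v : ℕ} (hn : 5 ≤ n) (hu : u < n) (hv : v < n) : partner u v < n := by
  unfold partner; split_ifs <;> omega

theorem partner_ne {u v : ℕ} (hv : v ≠ u) (h : pathParityColor 1 u v ≠ 0) :
    partner u v ≠ u ∧ pathParityColor 1 u (partner u v) ≠ pathParityColor 1 u v := by
  have hvu := mt eq_zero_iff.2 h
  unfold partner
  split_ifs with h14 h30
  · obtain ⟨rfl, rfl⟩ := h14; decide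
  · obtain ⟨rfl, rfl⟩ := h30; decide
  all_goals refine ⟨by omega, ?_⟩
  all_goals unfold pathParityColor; split_ifs <;> omega

theorem partner_injOn {u v w : ℕ} (hv : v ≠ u) (hw : w ≠ u) (h : pathParityColor 1 u v ≠ 0)
    (hc : pathParityColor 1 u v = pathParityColor 1 u w) (hp : partner u v = partner u w) :
    v = w := by
  have hvu := mt eq_zero_iff.2 h
  have hwu := mt eq_zero_iff.2 (hc ▸ h)
  unfold partner at hp
  split_ifs at hp <;> try omega
  -- the only collision is `partner 3 0 = partner 3 5`, and these two edges have different colours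
  all_goals
    obtain ⟨rfl, ⟨rfl, rfl⟩ | ⟨rfl, rfl⟩⟩ : u = 3 ∧ (v = 0 ∧ w = 5 ∨ v = 5 ∧ w = 0) := (by omega)
    all_goals exact absurd hc (by decide)

end pathParityColor

def pathParityColoring (n a : ℕ) : Sym2 (Fin n) → Fin 3 :=
  Sym2.lift ⟨fun u v => pathParityColor a u v, fun u v => pathParityColor.comm a u v⟩

theorem isDistinguishingEdgeColoring_pathParityColoring {n a : ℕ} (ha : a + 2 < n)
    (hn : 2 * a + 3 ≠ n) : IsDistinguishingEdgeColoring ⊤ (pathParityColoring n a) := by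
  refine isDistinguishingEdgeColoring_top_of_pathGraph (α := 0) (fun u v _ => ?_)
    ⟨⟨a, by omega⟩, ⟨a + 2, ha⟩, by simp, ?_⟩
  · exact pathParityColor.eq_zero_iff.trans pathGraph_adj.symm
  · exact pathParityColor.rev_ne ha hn

theorem isMajorityEdgeColoring_pathParityColoring_one {n : ℕ} (hn : 5 ≤ n) :
    IsMajorityEdgeColoring ⊤ (pathParityColoring n 1) := by
  intro u α
  rw [← card_neighborFinset_eq_degree, neighborFinset_top]
  rcases eq_or_ne α 0 with rfl | hα
  · have hle : #({v ∈ {u}ᶜ | pathParityColoring n 1 s(u, v) = 0}) ≤ 2 := calc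
      _ ≤ #({u.val + 1, u.val - 1} : Finset ℕ) := by
        refine card_le_card_of_injOn Fin.val (fun v hv => ?_) Fin.val_injective.injOn
        have h0 : pathParityColor 1 u v = 0 := (mem_filter.1 (mem_coe.1 hv)).2
        have := pathParityColor.eq_zero_iff.1 h0
        simp only [coe_insert, coe_singleton, Set.mem_insert_iff, Set.mem_singleton_iff]
        omega
      _ ≤ 2 := card_le_two
    have hcard : #({u}ᶜ : Finset (Fin n)) = n - 1 := by simp [card_compl]
    omega
  · refine two_mul_card_filter_le_of_injOn
      (fun v => ⟨pathParityColor.partner u v, pathParityColor.partner_lt hn u.2 v.2⟩)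
      (fun v hv hvα => ?_) (fun v hv w hw hvw => ?_)
    · have hvu : (v : ℕ) ≠ u := Fin.val_ne_of_ne (by simpa using hv)
      have hv0 : pathParityColor 1 u v ≠ 0 := fun h0 => hα (hvα.symm.trans h0)
      obtain ⟨hne, hc⟩ := pathParityColor.partner_ne hvu hv0
      exact ⟨by simpa [Fin.ext_iff] using hne, hvα ▸ hc⟩
    · obtain ⟨hvu, hvα⟩ := mem_filter.1 (mem_coe.1 hv)
      obtain ⟨hwu, hwα⟩ := mem_filter.1 (mem_coe.1 hw)
      have hv0 : pathParityColor 1 u v ≠ 0 := fun h0 => hα (hvα.symm.trans h0)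
      exact Fin.ext (pathParityColor.partner_injOn (Fin.val_ne_of_ne (by simpa using hvu))
        (Fin.val_ne_of_ne (by simpa using hwu)) hv0 (hvα.trans hwα.symm) (congrArg Fin.val hvw))

def triangleColoring : Sym2 (Fin 3) → Fin 3 :=
  Sym2.lift ⟨fun x y => x + y, add_comm⟩

theorem isMajorityEdgeColoring_triangleColoring :
    IsMajorityEdgeColoring ⊤ triangleColoring := by
  unfold IsMajorityEdgeColoring; decide

theorem isDistinguishingEdgeColoring_triangleColoring :
    IsDistinguishingEdgeColoring ⊤ triangleColoring :=
  isDistinguishingEdgeColoring_top_of_perm (by decide)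

theorem isMajorityEdgeColoring_pathParityColoring_five_zero :
    IsMajorityEdgeColoring ⊤ (pathParityColoring 5 0) := by
  unfold IsMajorityEdgeColoring; decide

/-- For `n ≥ 3`, `n ≠ 4`, the complete graph `K_n` satisfies `M'_D(K_n) ≤ 3`. -/
theorem majority_distinguishing_complete_graph (n : ℕ) (hn : 3 ≤ n) (hn4 : n ≠ 4) :
    ∃ c : Sym2 (Fin n) → Fin 3,
      IsMajorityEdgeColoring (⊤ : SimpleGraph (Fin n)) c ∧
      IsDistinguishingEdgeColoring (⊤ : SimpleGraph (Fin n)) c := by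
  obtain rfl | rfl | h6 : n = 3 ∨ n = 5 ∨ 6 ≤ n := by omega
  · exact ⟨triangleColoring, isMajorityEdgeColoring_triangleColoring,
      isDistinguishingEdgeColoring_triangleColoring⟩
  · exact ⟨pathParityColoring 5 0, isMajorityEdgeColoring_pathParityColoring_five_zero,
      isDistinguishingEdgeColoring_pathParityColoring (by norm_num) (by norm_num)⟩
  · exact ⟨pathParityColoring n 1, isMajorityEdgeColoring_pathParityColoring_one (by omega),
      isDistinguishingEdgeColoring_pathParityColoring (by omega) (by omega)⟩
end

section
/- The complete graph K_4 satisfies M'_D(K_4) = 5; that is, K_4 has an edge coloring with 5 colors that is both a majority edge coloring and a distinguishing edge coloring, and no such coloring with 4 colors exists. -/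
open SimpleGraph

/-!
Every vertex of `K₄` has degree 3, so a majority colouring of `K₄` is a proper edge colouring.
The six edges of `K₄` split into three perfect matchings, and two edges from different matchings
always meet. Hence a proper colouring with at most four colours makes two of the matchings
monochromatic, and then the double transposition that fixes the edges of the third matching
preserves every colour. With five colours a single monochromatic matching suffices to break all
symmetry.
-/

theorem IsMajorityEdgeColoring.ne_of_degree_lt_four {V : Type*} [Fintype V] [DecidableEq V]
    {G : SimpleGraph V} [DecidableRel G.Adj] {k : ℕ} {c : Sym2 V → Fin k}
    (hc : IsMajorityEdgeColoring G c) {u v w : V} (hu : G.degree u < 4) (hv : G.Adj u v)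
    (hw : G.Adj u w) (hvw : v ≠ w) : c s(u, v) ≠ c s(u, w) := by
  intro h
  have hsub : {v, w} ⊆ (G.neighborFinset u).filter (fun x => c s(u, x) = c s(u, w)) := by
    simp [Finset.insert_subset_iff, hv, hw, h]
  have hcard := Finset.card_le_card hsub
  rw [Finset.card_pair hvw] at hcard
  have := hc u (c s(u, w))
  omega

theorem isDistinguishingEdgeColoring_top_iff {V : Type*} {k : ℕ} {c : Sym2 V → Fin k} :
    IsDistinguishingEdgeColoring ⊤ c ↔
      ∀ σ : Equiv.Perm V, (∀ u v, u ≠ v → c s(σ u, σ v) = c s(u, v)) → σ = 1 := by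
  constructor
  · intro hc σ hσ
    ext x
    exact hc (Iso.completeGraph σ) (fun u v huv => hσ u v huv) x
  · intro hc φ hφ x
    have := hc φ.toEquiv (fun u v huv => hφ u v huv)
    exact Equiv.congr_fun this x

/-- In `K₄` on `a, b, x, y`, the double transposition `(a b)(x y)` fixes the edges `ab`, `xy`
and swaps the edges inside each of the perfect matchings `{ax, by}` and `{ay, bx}`. -/
theorem swap_mul_swap_preserves_edgeColoring {V α : Type*} [DecidableEq V] {a b x y : V}
    (hV : ∀ u, u = a ∨ u = b ∨ u = x ∨ u = y) (hax : a ≠ x) (hay : a ≠ y) (hbx : b ≠ x)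
    (hby : b ≠ y) {c : Sym2 V → α} (h₁ : c s(a, x) = c s(b, y)) (h₂ : c s(a, y) = c s(b, x))
    {u v : V} (huv : u ≠ v) :
    c s((Equiv.swap a b * Equiv.swap x y) u, (Equiv.swap a b * Equiv.swap x y) v) =
      c s(u, v) := by
  rcases hV u with rfl | rfl | rfl | rfl <;> rcases hV v with rfl | rfl | rfl | rfl <;>
    simp_all [Equiv.swap_apply_of_ne_of_ne, Sym2.eq_swap, hax.symm, hay.symm, hbx.symm,
      hby.symm]

theorem two_perfectMatchings_monochromatic_of_proper : ∀ c₀₁ c₀₂ c₀₃ c₁₂ c₁₃ c₂₃ : Fin 4,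
    (c₀₁ ≠ c₀₂ ∧ c₀₁ ≠ c₀₃ ∧ c₀₂ ≠ c₀₃) → (c₀₁ ≠ c₁₂ ∧ c₀₁ ≠ c₁₃ ∧ c₁₂ ≠ c₁₃) →
    (c₀₂ ≠ c₁₂ ∧ c₀₂ ≠ c₂₃ ∧ c₁₂ ≠ c₂₃) → (c₀₃ ≠ c₁₃ ∧ c₀₃ ≠ c₂₃ ∧ c₁₃ ≠ c₂₃) →
    (c₀₁ = c₂₃ ∧ c₀₂ = c₁₃) ∨ (c₀₁ = c₂₃ ∧ c₀₃ = c₁₂) ∨ (c₀₂ = c₁₃ ∧ c₀₃ = c₁₂) := by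
  decide

theorem exists_perm_ne_one_preserves_of_proper {c : Sym2 (Fin 4) → Fin 4}
    (hc : ∀ u v w : Fin 4, u ≠ v → u ≠ w → v ≠ w → c s(u, v) ≠ c s(u, w)) :
    ∃ σ : Equiv.Perm (Fin 4), σ ≠ 1 ∧ ∀ u v, u ≠ v → c s(σ u, σ v) = c s(u, v) := by
  have star (u v w x : Fin 4) (h : u ≠ v ∧ u ≠ w ∧ u ≠ x ∧ v ≠ w ∧ v ≠ x ∧ w ≠ x) :
      c s(u, v) ≠ c s(u, w) ∧ c s(u, v) ≠ c s(u, x) ∧ c s(u, w) ≠ c s(u, x) := by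
    obtain ⟨huv, huw, hux, hvw, hvx, hwx⟩ := h
    exact ⟨hc u v w huv huw hvw, hc u v x huv hux hvx, hc u w x huw hux hwx⟩
  have h₀ := star 0 1 2 3 (by decide)
  have h₁ := star 1 0 2 3 (by decide)
  have h₂ := star 2 0 1 3 (by decide)
  have h₃ := star 3 0 1 2 (by decide)
  simp only [Sym2.eq_swap] at h₀ h₁ h₂ h₃
  rcases two_perfectMatchings_monochromatic_of_proper _ _ _ _ _ _ h₀ h₁ h₂ h₃ with
    ⟨h₀₁, h₀₂⟩ | ⟨h₀₁, h₀₃⟩ | ⟨h₀₂, h₀₃⟩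
  · refine ⟨Equiv.swap 0 3 * Equiv.swap 1 2, by decide, fun u v huv => ?_⟩
    exact swap_mul_swap_preserves_edgeColoring (a := 0) (b := 3) (x := 1) (y := 2)
      (by decide) (by decide) (by decide) (by decide) (by decide)
      (by simpa only [Sym2.eq_swap] using h₀₁) (by simpa only [Sym2.eq_swap] using h₀₂) huv
  · refine ⟨Equiv.swap 0 2 * Equiv.swap 1 3, by decide, fun u v huv => ?_⟩
    exact swap_mul_swap_preserves_edgeColoring (a := 0) (b := 2) (x := 1) (y := 3)
      (by decide) (by decide) (by decide) (by decide) (by decide)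
      (by simpa only [Sym2.eq_swap] using h₀₁) (by simpa only [Sym2.eq_swap] using h₀₃) huv
  · refine ⟨Equiv.swap 0 1 * Equiv.swap 2 3, by decide, fun u v huv => ?_⟩
    exact swap_mul_swap_preserves_edgeColoring (a := 0) (b := 1) (x := 2) (y := 3)
      (by decide) (by decide) (by decide) (by decide) (by decide)
      (by simpa only [Sym2.eq_swap] using h₀₂) (by simpa only [Sym2.eq_swap] using h₀₃) huv

/-- The perfect matching `{03, 12}` is monochromatic and the other four edges get distinct
colours. -/
def k4Coloring : Sym2 (Fin 4) → Fin 5 :=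
  Sym2.lift ⟨![![0, 0, 1, 2], ![0, 0, 2, 3], ![1, 2, 0, 4], ![2, 3, 4, 0]], by decide⟩

theorem isMajorityEdgeColoring_k4Coloring : IsMajorityEdgeColoring ⊤ k4Coloring := by
  unfold IsMajorityEdgeColoring
  decide

theorem isDistinguishingEdgeColoring_k4Coloring : IsDistinguishingEdgeColoring ⊤ k4Coloring :=
  isDistinguishingEdgeColoring_top_iff.mpr (by decide)

/-- `M'_D(K_4) = 5`: the complete graph `K_4` has a majority distinguishing edge coloring
with 5 colors, but none with 4 colors. -/
theorem majority_distinguishing_K4 :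
    (∃ c : Sym2 (Fin 4) → Fin 5,
      IsMajorityEdgeColoring (⊤ : SimpleGraph (Fin 4)) c ∧
      IsDistinguishingEdgeColoring (⊤ : SimpleGraph (Fin 4)) c) ∧
    ¬ (∃ c : Sym2 (Fin 4) → Fin 4,
      IsMajorityEdgeColoring (⊤ : SimpleGraph (Fin 4)) c ∧
      IsDistinguishingEdgeColoring (⊤ : SimpleGraph (Fin 4)) c) := by
  refine ⟨⟨k4Coloring, isMajorityEdgeColoring_k4Coloring,
    isDistinguishingEdgeColoring_k4Coloring⟩, ?_⟩
  rintro ⟨c, hmaj, hdist⟩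
  have hproper : ∀ u v w : Fin 4, u ≠ v → u ≠ w → v ≠ w → c s(u, v) ≠ c s(u, w) :=
    fun u v w huv huw hvw => hmaj.ne_of_degree_lt_four (by simp) huv huw hvw
  obtain ⟨σ, hσ, hpres⟩ := exists_perm_ne_one_preserves_of_proper hproper
  exact hσ (isDistinguishingEdgeColoring_top_iff.mp hdist σ hpres)
end

section
/- For every natural number n ≥ 4, the complete balanced bipartite graph K_{n,n} satisfies M'_D(K_{n,n}) ≤ 3; that is, K_{n,n} has an edge coloring with 3 colors that is both a majority edge coloring and a distinguishing edge coloring. -/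
open SimpleGraph

instance {α β : Type*} : DecidableRel (completeBipartiteGraph α β).Adj := fun v w =>
  inferInstanceAs (Decidable (v.isLeft ∧ w.isRight ∨ v.isRight ∧ w.isLeft))

/-!
Index both sides of `K_{n,n}` by `ℤ/n` and give the edge `(i, j)` the colour `F i (j - i)` of a
circulant pattern `F` in which colour `2` marks exactly the Hamiltonian cycle `j - i ∈ {0, 1}`.
A colour-preserving automorphism preserves this `2n`-cycle, so it acts on it as a rotation or a
reflection, possibly exchanging the two sides; `F` is chosen so that none of these except the
identity preserves it, while every colour fills at most half of each row and each column.
For `n ≥ 6` the rows `0, 1, 3` get one more edge of colour `1` than the others, and the set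
`{0, 1, 3}` has no nontrivial rotation or reflection symmetry in `ℤ/n`; for `n = 4, 5` explicit
patterns are checked by computation.
-/

open Finset Function Sum

section CompleteBipartite

variable {α β : Type*} {k : ℕ}

theorem completeBipartiteGraph_adj_iff_isLeft_ne {x y : α ⊕ β} :
    (completeBipartiteGraph α β).Adj x y ↔ x.isLeft ≠ y.isLeft := by
  cases x <;> cases y <;> simp

theorem SimpleGraph.Iso.isLeft_eq_iff_of_completeBipartiteGraph
    (φ : completeBipartiteGraph α β ≃g completeBipartiteGraph α β) (x y : α ⊕ β) :
    (φ x).isLeft = x.isLeft ↔ (φ y).isLeft = y.isLeft := by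
  have h := φ.map_adj_iff (v := x) (w := y)
  simp only [completeBipartiteGraph_adj_iff_isLeft_ne, ne_eq] at h
  revert h
  cases (φ x).isLeft <;> cases (φ y).isLeft <;> cases x.isLeft <;> cases y.isLeft <;> simp

/-- Pairs inside one side are not edges of `K_{α,β}`; they get the junk colour `0`. -/
def matrixEdgeColoring [NeZero k] (M : α → β → Fin k) : Sym2 (α ⊕ β) → Fin k :=
  Sym2.lift ⟨fun
    | inl a, inr b | inr b, inl a => M a b
    | _, _ => 0, by rintro (a | b) (a' | b') <;> rfl⟩

variable [NeZero k] (M : α → β → Fin k)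

@[simp] theorem matrixEdgeColoring_inl_inr (a : α) (b : β) :
    matrixEdgeColoring M s(inl a, inr b) = M a b := rfl

@[simp] theorem matrixEdgeColoring_inr_inl (a : α) (b : β) :
    matrixEdgeColoring M s(inr b, inl a) = M a b := rfl

theorem isDistinguishingEdgeColoring_matrixEdgeColoring
    (hpres : ∀ (σ : α → α) (τ : β → β), Injective σ → Injective τ →
      (∀ a b, M (σ a) (τ b) = M a b) → (∀ a, σ a = a) ∧ ∀ b, τ b = b)
    (hswap : ∀ (σ : α → β) (τ : β → α), Injective σ → Injective τ →
      ¬ ∀ a b, M (τ b) (σ a) = M a b) :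
    IsDistinguishingEdgeColoring (completeBipartiteGraph α β) (matrixEdgeColoring M) := by
  intro φ hφ
  have hM (a : α) (b : β) : matrixEdgeColoring M s(φ (inl a), φ (inr b)) = M a b :=
    hφ (inl a) (inr b) (by simp)
  by_cases hside : ∀ x, (φ x).isLeft = x.isLeft
  · choose σ hσ using fun a => isLeft_iff.mp (hside (inl a))
    choose τ hτ using fun b => isRight_iff.mp (isLeft_eq_false.mp (hside (inr b)))
    have hid := hpres σ τ
      (fun a a' h => inl_injective (φ.injective (by rw [hσ, hσ, h])))
      (fun b b' h => inr_injective (φ.injective (by rw [hτ, hτ, h])))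
      (fun a b => by simpa [hσ, hτ] using hM a b)
    rintro (a | b)
    · rw [hσ, hid.1]
    · rw [hτ, hid.2]
  · obtain ⟨x₀, hx₀⟩ := not_forall.mp hside
    have hflip (x : α ⊕ β) : (φ x).isLeft = !x.isLeft := by
      have := (φ.isLeft_eq_iff_of_completeBipartiteGraph x x₀).not.mpr hx₀
      revert this
      cases (φ x).isLeft <;> cases x.isLeft <;> simp
    choose σ hσ using fun a => isRight_iff.mp (isLeft_eq_false.mp (hflip (inl a)))
    choose τ hτ using fun b => isLeft_iff.mp (hflip (inr b))
    exact absurd (fun a b => by simpa [hσ, hτ] using hM a b) <| hswap σ τ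
      (fun a a' h => inl_injective (φ.injective (by rw [hσ, hσ, h])))
      (fun b b' h => inr_injective (φ.injective (by rw [hτ, hτ, h])))

variable [Fintype α] [Fintype β]

theorem completeBipartiteGraph_neighborFinset_inl (a : α) :
    (completeBipartiteGraph α β).neighborFinset (inl a) = univ.map .inr := by
  ext (_ | _) <;> simp

theorem completeBipartiteGraph_neighborFinset_inr (b : β) :
    (completeBipartiteGraph α β).neighborFinset (inr b) = univ.map .inl := by
  ext (_ | _) <;> simp

theorem isMajorityEdgeColoring_matrixEdgeColoring [DecidableEq α] [DecidableEq β]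
    (hrow : ∀ a c, 2 * #{b | M a b = c} ≤ Fintype.card β)
    (hcol : ∀ b c, 2 * #{a | M a b = c} ≤ Fintype.card α) :
    IsMajorityEdgeColoring (completeBipartiteGraph α β) (matrixEdgeColoring M) := by
  rintro (a | b) c
  · simpa [degree, completeBipartiteGraph_neighborFinset_inl, filter_map] using hrow a c
  · simpa [degree, completeBipartiteGraph_neighborFinset_inr, filter_map] using hcol b c

end CompleteBipartite

section Circulant

open Fin.CommRing

variable {n k : ℕ} [NeZero n]

theorem Fin.induction_add_one {P : Fin n → Prop} (zero : P 0) (succ : ∀ i, P i → P (i + 1))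
    (x : Fin n) : P x := by
  rw [← Fin.cast_val_eq_self x]
  induction x.val with
  | zero => simpa using zero
  | succ m ih => simpa using succ _ ih

theorem Fin.translation_or_reflection_of_preserves_cycle (hn : 1 < n) {σ τ : Fin n → Fin n}
    (hσ : Injective σ) (hτ : Injective τ)
    (h : ∀ i j, τ j - σ i = 0 ∨ τ j - σ i = 1 ↔ j - i = 0 ∨ j - i = 1) :
    (∃ t, ∀ x, σ x = x + t ∧ τ x = x + t) ∨
      (∃ c, ∀ x, σ x = c - x ∧ τ x = c + 1 - x) := by
  have : Nontrivial (Fin n) := Fin.nontrivial_iff_two_le.mpr hn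
  have rung (i : Fin n) : τ i = σ i ∨ τ i = σ i + 1 := by
    have := (h i i).mpr (by simp)
    rwa [sub_eq_zero, sub_eq_iff_eq_add'] at this
  have diag (i : Fin n) : τ (i + 1) = σ i ∨ τ (i + 1) = σ i + 1 := by
    have := (h i (i + 1)).mpr (by simp)
    rwa [sub_eq_zero, sub_eq_iff_eq_add'] at this
  have ne_succ (f : Fin n → Fin n) (hf : Injective f) (i : Fin n) : f (i + 1) ≠ f i :=
    hf.ne (by simp)
  rcases rung 0 with h0 | h0
  · refine .inl ⟨σ 0, Fin.induction_add_one (by simp [h0]) fun i ⟨hσi, hτi⟩ => ?_⟩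
    have hτ' : τ (i + 1) = σ i + 1 :=
      (diag i).resolve_left fun e => ne_succ τ hτ i (by rw [e, hσi, hτi])
    have hσ' : σ (i + 1) = τ (i + 1) :=
      ((rung (i + 1)).resolve_right fun e => ne_succ σ hσ i (by
        rw [hτ'] at e; exact add_right_cancel e.symm)).symm
    constructor <;> simp only [hσ', hτ', hσi] <;> ring
  · refine .inr ⟨σ 0, Fin.induction_add_one (by simp [h0]) fun i ⟨hσi, hτi⟩ => ?_⟩
    have hτ' : τ (i + 1) = σ i :=
      (diag i).resolve_right fun e => ne_succ τ hτ i (by rw [e, hσi, hτi]; ring)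
    have hσ' : τ (i + 1) = σ (i + 1) + 1 :=
      (rung (i + 1)).resolve_left fun e => ne_succ σ hσ i (by rw [← e, hτ'])
    constructor
    · rw [eq_sub_of_add_eq hσ'.symm, hτ', hσi]; ring
    · rw [hτ', hσi]; ring

structure IsBalancedCirculant (F : Fin n → Fin n → Fin k) : Prop where
  row : ∀ i c, 2 * #{d | F i d = c} ≤ n
  col : ∀ j c, 2 * #{d | F (j - d) d = c} ≤ n

/-- The fields exclude, in this order, the nontrivial rotations and the reflections of the cycle
`j - i ∈ {0, 1}` that keep the two sides, and the reflections and rotations that exchange them. -/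
structure IsRigidCirculant (F : Fin n → Fin n → Fin k) : Prop where
  rotate : ∀ t, (∀ i d, F (i + t) d = F i d) → t = 0
  reflect : ∀ c, ¬ ∀ i d, F (c - i) (1 - d) = F i d
  swap_reflect : ∀ c, ¬ ∀ i d, F (c - i - d) d = F i d
  swap_rotate : ∀ c, ¬ ∀ i d, F (i + d - c) (1 - d) = F i d

variable [NeZero k] {F : Fin n → Fin n → Fin k}

theorem isMajorityEdgeColoring_circulant (hF : IsBalancedCirculant F) :
    IsMajorityEdgeColoring (completeBipartiteGraph (Fin n) (Fin n))
      (matrixEdgeColoring fun i j => F i (j - i)) := by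
  apply isMajorityEdgeColoring_matrixEdgeColoring <;> simp only [Fintype.card_fin]
  · intro i c
    convert hF.row i c using 2
    exact card_equiv (Equiv.subRight i) (by simp)
  · intro j c
    convert hF.col j c using 2
    exact card_equiv (Equiv.subLeft j) (by simp)

theorem isDistinguishingEdgeColoring_circulant (hn : 1 < n) {c₀ : Fin k}
    (hcycle : ∀ i d, F i d = c₀ ↔ d = 0 ∨ d = 1) (hF : IsRigidCirculant F) :
    IsDistinguishingEdgeColoring (completeBipartiteGraph (Fin n) (Fin n))
      (matrixEdgeColoring fun i j => F i (j - i)) := by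
  apply isDistinguishingEdgeColoring_matrixEdgeColoring
  · intro σ τ hσ hτ hM
    have hcyc (i j : Fin n) : τ j - σ i = 0 ∨ τ j - σ i = 1 ↔ j - i = 0 ∨ j - i = 1 := by
      rw [← hcycle, hM, hcycle]
    rcases Fin.translation_or_reflection_of_preserves_cycle hn hσ hτ hcyc with
      ⟨t, ht⟩ | ⟨c, hc⟩
    · obtain rfl : t = 0 := hF.rotate t fun i d => by simpa [ht] using hM i (i + d)
      exact ⟨fun a => by simpa using (ht a).1, fun b => by simpa using (ht b).2⟩
    · simp only [hc] at hM
      refine absurd (fun i d => ?_) (hF.reflect c)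
      convert hM i (i + d) using 2 <;> ring
  · intro σ τ hσ hτ hM
    -- negating both maps turns `σ i - τ j` into the side-preserving form `-τ j - -σ i`
    have hcyc (i j : Fin n) :
        -τ j - -σ i = 0 ∨ -τ j - -σ i = 1 ↔ j - i = 0 ∨ j - i = 1 := by
      rw [neg_sub_neg, ← hcycle, hM, hcycle]
    rcases Fin.translation_or_reflection_of_preserves_cycle hn (neg_injective.comp hσ)
      (neg_injective.comp hτ) hcyc with ⟨t, ht⟩ | ⟨c, hc⟩
    · simp only [comp_apply, neg_eq_iff_eq_neg] at ht
      simp only [ht] at hM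
      refine hF.swap_reflect (-t) fun i d => ?_
      convert hM i (i + d) using 2 <;> ring
    · simp only [comp_apply, neg_eq_iff_eq_neg] at hc
      simp only [hc] at hM
      refine hF.swap_rotate (c + 1) fun i d => ?_
      convert hM i (i + d) using 2 <;> ring

theorem exists_majority_distinguishing_of_circulant (hn : 1 < n) {c₀ : Fin k}
    (hcycle : ∀ i d, F i d = c₀ ↔ d = 0 ∨ d = 1) (hbal : IsBalancedCirculant F)
    (hrigid : IsRigidCirculant F) :
    ∃ c : Sym2 (Fin n ⊕ Fin n) → Fin k,
      IsMajorityEdgeColoring (completeBipartiteGraph (Fin n) (Fin n)) c ∧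
      IsDistinguishingEdgeColoring (completeBipartiteGraph (Fin n) (Fin n)) c :=
  ⟨_, isMajorityEdgeColoring_circulant hbal,
    isDistinguishingEdgeColoring_circulant hn hcycle hrigid⟩

end Circulant

def circulantPattern4 : Fin 4 → Fin 4 → Fin 3 :=
  ![![2, 2, 0, 0], ![2, 2, 0, 0], ![2, 2, 1, 0], ![2, 2, 1, 1]]

def circulantPattern5 : Fin 5 → Fin 5 → Fin 3 :=
  ![![2, 2, 0, 0, 1], ![2, 2, 0, 0, 1], ![2, 2, 0, 0, 1], ![2, 2, 1, 0, 0], ![2, 2, 0, 1, 1]]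

section Large

open Fin.CommRing

variable {n : ℕ}

def IsZeroOneOrThree (i : Fin n) : Prop := i.val = 0 ∨ i.val = 1 ∨ i.val = 3

instance : DecidablePred (IsZeroOneOrThree (n := n)) :=
  fun _ => inferInstanceAs (Decidable (_ ∨ _ ∨ _))

theorem Fin.card_filter_le_of_val_mem_Ico {p : Fin n → Prop} [DecidablePred p] {s t : ℕ}
    (h : ∀ d, p d → d.val ∈ Ico s t) : #{d | p d} ≤ t - s :=
  (card_le_card_of_injOn Fin.val (fun d hd => h d (mem_filter.mp hd).2)
    Fin.val_injective.injOn).trans (Nat.card_Ico s t).le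

theorem eq_zero_of_forall_isZeroOneOrThree_add_iff [NeZero n] (hn : 6 ≤ n) {t : Fin n}
    (h : ∀ i, IsZeroOneOrThree (i + t) ↔ IsZeroOneOrThree i) : t = 0 := by
  have h0 := (h ⟨0, by omega⟩).mpr (by simp [IsZeroOneOrThree])
  have h1 := (h ⟨1, by omega⟩).mpr (by simp [IsZeroOneOrThree])
  simp only [IsZeroOneOrThree, Fin.val_add_eq_ite] at h0 h1
  rw [Fin.ext_iff]
  split_ifs at h0 h1 <;> simp at * <;> omega

theorem not_forall_isZeroOneOrThree_sub_iff (hn : 6 ≤ n) (c : Fin n) :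
    ¬ ∀ i, IsZeroOneOrThree (c - i) ↔ IsZeroOneOrThree i := by
  intro h
  have h0 := (h ⟨0, by omega⟩).mpr (by simp [IsZeroOneOrThree])
  have h1 := (h ⟨1, by omega⟩).mpr (by simp [IsZeroOneOrThree])
  have h3 := (h ⟨3, by omega⟩).mpr (by simp [IsZeroOneOrThree])
  have e0 := Fin.coe_int_sub_eq_ite c ⟨0, by omega⟩
  have e1 := Fin.coe_int_sub_eq_ite c ⟨1, by omega⟩
  have e3 := Fin.coe_int_sub_eq_ite c ⟨3, by omega⟩
  simp only [IsZeroOneOrThree, Fin.le_iff_val_le_val] at h0 h1 h3 e0 e1 e3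
  split_ifs at e0 e1 e3 <;> omega

variable (n) in
def circulantPatternLarge (i d : Fin n) : Fin 3 :=
  if d.val < 2 then 2
  else if d.val ≤ n / 2 + if IsZeroOneOrThree i then 1 else 0 then 1
  else 0

theorem circulantPatternLarge_eq_two_iff [NeZero n] (hn : 2 ≤ n) (i d : Fin n) :
    circulantPatternLarge n i d = 2 ↔ d = 0 ∨ d = 1 := by
  have h01 : d = 0 ∨ d = 1 ↔ d.val < 2 := by
    simp only [Fin.ext_iff, Fin.val_zero, Fin.val_one', Nat.mod_eq_of_lt hn]
    omega
  rw [h01, circulantPatternLarge]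
  split_ifs <;> simp_all

theorem two_mul_card_circulantPatternLarge_le (hn : 4 ≤ n) (ρ : Fin n → Fin n) (c : Fin 3) :
    2 * #{d | circulantPatternLarge n (ρ d) d = c} ≤ n := by
  obtain ⟨s, t, hst, hval⟩ : ∃ s t, 2 * (t - s) ≤ n ∧
      ∀ d, circulantPatternLarge n (ρ d) d = c → d.val ∈ Ico s t := by
    fin_cases c
    on_goal 1 => refine ⟨n / 2 + 1, n, by omega, ?_⟩
    on_goal 2 => refine ⟨2, n / 2 + 2, by omega, ?_⟩
    on_goal 3 => refine ⟨0, 2, by omega, ?_⟩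
    all_goals
      intro d hd
      rw [circulantPatternLarge] at hd
      split_ifs at hd <;> simp only [mem_Ico] <;> first | omega | simp at hd
  exact (Nat.mul_le_mul_left 2 (Fin.card_filter_le_of_val_mem_Ico hval)).trans hst

theorem isBalancedCirculant_circulantPatternLarge (hn : 4 ≤ n) :
    IsBalancedCirculant (circulantPatternLarge n) :=
  ⟨fun i => two_mul_card_circulantPatternLarge_le hn fun _ => i,
    fun j => two_mul_card_circulantPatternLarge_le hn fun d => j - d⟩

theorem circulantPatternLarge_half_eq_one_iff (hn : 3 ≤ n) (i : Fin n) :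
    circulantPatternLarge n i ⟨n / 2 + 1, by omega⟩ = 1 ↔ IsZeroOneOrThree i := by
  rw [circulantPatternLarge]
  split_ifs <;> simp_all; omega

theorem circulantPatternLarge_one_sub_ne [NeZero n] (hn : 5 ≤ n) (i j : Fin n) {d : Fin n}
    (hd : d.val = 2) : circulantPatternLarge n i (1 - d) ≠ circulantPatternLarge n j d := by
  have h1 : (1 : Fin n).val = 1 := (Fin.val_one' n).trans (Nat.mod_eq_of_lt (by omega))
  have hsub : (1 - d).val = n - 1 := by
    rw [Fin.coe_sub_iff_lt.mpr (by rw [Fin.lt_def, h1, hd]; omega), h1, hd]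
    omega
  simp only [circulantPatternLarge, hsub, hd]
  split_ifs <;> simp_all <;> omega

theorem isRigidCirculant_circulantPatternLarge [NeZero n] (hn : 6 ≤ n) :
    IsRigidCirculant (circulantPatternLarge n) where
  rotate t h := eq_zero_of_forall_isZeroOneOrThree_add_iff hn fun i => by
    rw [← circulantPatternLarge_half_eq_one_iff (by omega), h,
      circulantPatternLarge_half_eq_one_iff (by omega)]
  reflect c h := circulantPatternLarge_one_sub_ne (by omega) _ _ rfl (h 0 ⟨2, by omega⟩)
  swap_reflect c h :=
    not_forall_isZeroOneOrThree_sub_iff hn (c - ⟨n / 2 + 1, by omega⟩) fun i => by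
      rw [← circulantPatternLarge_half_eq_one_iff (by omega), sub_right_comm, h,
        circulantPatternLarge_half_eq_one_iff (by omega)]
  swap_rotate c h := circulantPatternLarge_one_sub_ne (by omega) _ _ rfl (h 0 ⟨2, by omega⟩)

end Large

/-- For `n ≥ 4`, the complete balanced bipartite graph `K_{n,n}` satisfies
`M'_D(K_{n,n}) ≤ 3`. -/
theorem majority_distinguishing_complete_bipartite (n : ℕ) (hn : 4 ≤ n) :
    ∃ c : Sym2 (Fin n ⊕ Fin n) → Fin 3,
      IsMajorityEdgeColoring (completeBipartiteGraph (Fin n) (Fin n)) c ∧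
      IsDistinguishingEdgeColoring (completeBipartiteGraph (Fin n) (Fin n)) c := by
  rcases (by omega : n = 4 ∨ n = 5 ∨ 6 ≤ n) with rfl | rfl | hn6
  · exact exists_majority_distinguishing_of_circulant (F := circulantPattern4) (c₀ := 2)
      (by norm_num) (by decide) ⟨by decide, by decide⟩
      ⟨by decide, by decide, by decide, by decide⟩
  · exact exists_majority_distinguishing_of_circulant (F := circulantPattern5) (c₀ := 2)
      (by norm_num) (by decide) ⟨by decide, by decide⟩
      ⟨by decide, by decide, by decide, by decide⟩
  · have : NeZero n := ⟨by omega⟩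
    exact exists_majority_distinguishing_of_circulant (by omega)
      (circulantPatternLarge_eq_two_iff (by omega))
      (isBalancedCirculant_circulantPatternLarge (by omega))
      (isRigidCirculant_circulantPatternLarge hn6)
end

section
/- For every natural number n ≥ 3, the complete bipartite graph K_{2,n} satisfies M'_D(K_{2,n}) ≤ min{k ∈ ℕ : k(k−1) − 1 ≥ n}; that is, if k is the least natural number with k(k−1) − 1 ≥ n, then K_{2,n} has an edge coloring with k colors that is both a majority edge coloring and a distinguishing edge coloring. -/
/-! Give the right vertex `j = k * q + r` (`r < k`) of `K_{2,n}` the ordered pair of colours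
`(r, r - q - 1) mod k` on its two edges; for `j < k (k - 1)` these pairs are distinct and
consist of distinct colours. Within each block of `k` consecutive indices both coordinates are
injective, so at a left vertex every colour occurs at most `⌈n / k⌉ ≤ n / 2` times.
Since `n ≠ 2`, automorphisms preserve the sides (compare degrees). One fixing both left vertices
fixes everything, the labels being distinct; one swapping them would have to send vertex `0`,
labelled `(0, k - 1)`, to a vertex labelled `(k - 1, 0)`, but that label belongs only to
`k (k - 1) - 1 ≥ n`. -/

open SimpleGraph

open Finset Function

section CompleteBipartite

variable {α β : Type*}

/-- `d` is a dummy colour for the non-edges. -/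
def bipartiteEdgeColoring {γ : Type*} (d : γ) (f : β → α → γ) : Sym2 (α ⊕ β) → γ :=
  Sym2.lift ⟨fun u v => match u, v with
    | .inl a, .inr b => f b a
    | .inr b, .inl a => f b a
    | _, _ => d, by rintro (a | b) (a' | b') <;> rfl⟩

@[simp]
lemma bipartiteEdgeColoring_inl_inr {γ : Type*} (d : γ) (f : β → α → γ) (a : α) (b : β) :
    bipartiteEdgeColoring d f s(.inl a, .inr b) = f b a := rfl

variable [Fintype α] [Fintype β]

lemma neighborFinset_completeBipartiteGraph_inl (a : α) :
    (completeBipartiteGraph α β).neighborFinset (.inl a) = univ.map Embedding.inr := by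
  ext (a' | b) <;> rw [mem_neighborFinset] <;> simp [completeBipartiteGraph]

lemma neighborFinset_completeBipartiteGraph_inr (b : β) :
    (completeBipartiteGraph α β).neighborFinset (.inr b) = univ.map Embedding.inl := by
  ext (a | b') <;> rw [mem_neighborFinset] <;> simp [completeBipartiteGraph]

lemma degree_completeBipartiteGraph_inl (a : α) :
    (completeBipartiteGraph α β).degree (.inl a) = Fintype.card β := by
  rw [← card_neighborFinset_eq_degree, neighborFinset_completeBipartiteGraph_inl, card_map,
    card_univ]

lemma degree_completeBipartiteGraph_inr (b : β) :
    (completeBipartiteGraph α β).degree (.inr b) = Fintype.card α := by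
  rw [← card_neighborFinset_eq_degree, neighborFinset_completeBipartiteGraph_inr, card_map,
    card_univ]

lemma isLeft_completeBipartiteGraph_iso_apply (hcard : Fintype.card α ≠ Fintype.card β)
    (φ : completeBipartiteGraph α β ≃g completeBipartiteGraph α β) (v : α ⊕ β) :
    (φ v).isLeft = v.isLeft := by
  -- the ascription replaces the `Fintype` instances chosen by `Iso.degree_eq` by the usual ones
  have hdeg : (completeBipartiteGraph α β).degree (φ v) =
      (completeBipartiteGraph α β).degree v := φ.degree_eq v
  generalize φ v = w at hdeg ⊢
  rcases v with a | b <;> rcases w with a' | b' <;>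
    simp only [degree_completeBipartiteGraph_inl, degree_completeBipartiteGraph_inr] at hdeg
  exacts [rfl, absurd hdeg hcard, absurd hdeg.symm hcard, rfl]

variable {k : ℕ} (d : Fin k) (f : β → α → Fin k)

lemma isMajorityEdgeColoring_bipartiteEdgeColoring [DecidableEq α] [DecidableEq β]
    (hleft : ∀ a x, 2 * #{b | f b a = x} ≤ Fintype.card β)
    (hright : ∀ b x, 2 * #{a | f b a = x} ≤ Fintype.card α) :
    IsMajorityEdgeColoring (completeBipartiteGraph α β) (bipartiteEdgeColoring d f) := by
  rintro (a | b) x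
  · rw [← card_neighborFinset_eq_degree, neighborFinset_completeBipartiteGraph_inl, filter_map,
      card_map, card_map, card_univ]
    exact hleft a x
  · rw [← card_neighborFinset_eq_degree, neighborFinset_completeBipartiteGraph_inr, filter_map,
      card_map, card_map, card_univ]
    exact hright b x

lemma isDistinguishingEdgeColoring_bipartiteEdgeColoring
    (hcard : Fintype.card α ≠ Fintype.card β) (hf : Injective f)
    (hrows : ∀ π : α → α, Injective π → (∀ b, f b ∘ π ∈ Set.range f) → π = id) :
    IsDistinguishingEdgeColoring (completeBipartiteGraph α β) (bipartiteEdgeColoring d f) := by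
  intro φ hφ
  have hside := isLeft_completeBipartiteGraph_iso_apply hcard φ
  choose π hπ using fun a => Sum.isLeft_iff.mp ((hside (.inl a)).trans rfl)
  choose τ hτ using fun b => Sum.isRight_iff.mp (by simpa using hside (.inr b))
  have hcol (b : β) : f (τ b) ∘ π = f b := funext fun a => by
    simpa [hπ, hτ] using hφ (.inl a) (.inr b) (by simp [completeBipartiteGraph])
  have hπinj : Injective π := fun a a' h => Sum.inl_injective (φ.injective (by rw [hπ, hπ, h]))
  have hτinj : Injective τ := fun b b' h => Sum.inr_injective (φ.injective (by rw [hτ, hτ, h]))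
  have hπid : π = id := hrows π hπinj fun b => by
    obtain ⟨b', rfl⟩ := Finite.injective_iff_surjective.mp hτinj b
    exact ⟨b', (hcol b').symm⟩
  rintro (a | b)
  · rw [hπ, hπid, id]
  · rw [hτ, show τ b = b from hf (by simpa [hπid] using hcol b)]

end CompleteBipartite

lemma Fin.eq_id_or_swap_of_injective {π : Fin 2 → Fin 2} (hπ : Injective π) :
    π = id ∨ π 0 = 1 ∧ π 1 = 0 := by
  revert π; decide

lemma card_filter_le_one_of_fin_two {γ : Type*} [DecidableEq γ] {g : Fin 2 → γ}
    (hg : g 0 ≠ g 1) (x : γ) : #{i | g i = x} ≤ 1 := by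
  refine card_le_one.mpr fun i hi i' hi' => ?_
  simp only [mem_filter, mem_univ, true_and] at hi hi'
  fin_cases i <;> fin_cases i' <;> simp_all

lemma card_filter_le_of_injOn_div {γ : Type*} [DecidableEq γ] {n k : ℕ} (hk : 0 < k)
    (g : ℕ → γ) (hg : ∀ j t, j / k = t / k → g j = g t → j = t) (x : γ) :
    #{j : Fin n | g j = x} ≤ (n + k - 1) / k := by
  rw [← card_range ((n + k - 1) / k)]
  refine card_le_card_of_injOn (fun j => (j : ℕ) / k) (fun j _ => ?_) fun j hj t ht h => ?_
  · have := Nat.div_mul_le_self j k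
    have := j.isLt
    dsimp only
    rw [coe_range, Set.mem_Iio, Nat.lt_iff_add_one_le, Nat.le_div_iff_mul_le hk, Nat.add_mul,
      one_mul]
    omega
  · simp only [mem_coe, mem_filter, mem_univ, true_and] at hj ht
    exact Fin.ext (hg j t h (hj.trans ht.symm))

lemma two_mul_add_sub_one_div_le {n k : ℕ} (hn : 3 ≤ n) (hk : 3 ≤ k) :
    2 * ((n + k - 1) / k) ≤ n := by
  have hm := Nat.div_mul_le_self (n + k - 1) k
  generalize (n + k - 1) / k = m at hm ⊢
  rcases le_or_gt m 1 with h | h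
  · omega
  · have : m * k + 1 ≤ n + k := by omega
    nlinarith

open Fin.NatCast

lemma Fin.natCast_eq_natCast_iff_modEq {k a b : ℕ} [NeZero k] :
    (a : Fin k) = b ↔ a ≡ b [MOD k] := by
  rw [Fin.ext_iff, Fin.val_natCast, Fin.val_natCast, Nat.ModEq]

lemma Nat.eq_of_modEq_of_div_eq {k a b : ℕ} (hmod : a ≡ b [MOD k]) (hdiv : a / k = b / k) :
    a = b := by
  rw [← Nat.div_add_mod a k, ← Nat.div_add_mod b k, hdiv, hmod]

section PairLabel

variable (k : ℕ) [NeZero k]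

/-- The colours `(j, j - j / k - 1) mod k`, the subtraction written as `+ (k - 1 - j / k)` to stay
in `ℕ`. -/
def pairLabel (j : ℕ) : Fin 2 → Fin k :=
  ![(j : Fin k), ((j + (k - 1 - j / k) : ℕ) : Fin k)]

variable {k}

@[simp]
lemma pairLabel_apply_zero (j : ℕ) : pairLabel k j 0 = (j : Fin k) := rfl

@[simp]
lemma pairLabel_apply_one (j : ℕ) :
    pairLabel k j 1 = ((j + (k - 1 - j / k) : ℕ) : Fin k) := rfl

lemma pairLabel_zero_ne_one {j : ℕ} (hj : j < k * (k - 1)) :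
    pairLabel k j 0 ≠ pairLabel k j 1 := by
  have hq : j / k < k - 1 := Nat.div_lt_of_lt_mul hj
  rw [pairLabel_apply_zero, pairLabel_apply_one, Ne, Fin.natCast_eq_natCast_iff_modEq]
  intro h
  have hoff : 0 ≡ k - 1 - j / k [MOD k] := Nat.ModEq.add_left_cancel' j h
  generalize j / k = q at hq hoff
  have := Nat.le_of_dvd (by omega) ((Nat.modEq_zero_iff_dvd).mp hoff.symm)
  omega

lemma eq_of_pairLabel_apply_eq_of_div_eq {j t : ℕ} (i : Fin 2) (hdiv : j / k = t / k)
    (h : pairLabel k j i = pairLabel k t i) : j = t := by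
  refine Nat.eq_of_modEq_of_div_eq ?_ hdiv
  match i with
  | 0 => exact Fin.natCast_eq_natCast_iff_modEq.mp h
  | 1 =>
    rw [pairLabel_apply_one, pairLabel_apply_one, hdiv] at h
    exact Nat.ModEq.add_right_cancel' _ (Fin.natCast_eq_natCast_iff_modEq.mp h)

lemma pairLabel_injOn : Set.InjOn (pairLabel k) (Set.Iio (k * (k - 1))) := by
  intro j hj t ht h
  have hk := NeZero.pos k
  have hmod : j ≡ t [MOD k] := Fin.natCast_eq_natCast_iff_modEq.mp (congrFun h 0)
  have hoff : k - 1 - j / k ≡ k - 1 - t / k [MOD k] :=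
    Nat.ModEq.add_left_cancel hmod (Fin.natCast_eq_natCast_iff_modEq.mp (congrFun h 1))
  have hj' : j / k < k - 1 := Nat.div_lt_of_lt_mul hj
  have ht' : t / k < k - 1 := Nat.div_lt_of_lt_mul ht
  refine Nat.eq_of_modEq_of_div_eq hmod ?_
  generalize j / k = q at hj' hoff
  generalize t / k = q' at ht' hoff
  have := hoff.eq_of_lt_of_lt (by omega) (by omega)
  omega

lemma pairLabel_mul_pred_sub_one (hk : 2 ≤ k) :
    pairLabel k (k * (k - 1) - 1) = ![((k - 1 : ℕ) : Fin k), 0] := by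
  have hmul : k * (k - 1) = k * (k - 2) + k := by
    rw [← Nat.mul_add_one]; congr 1; omega
  have hlast : k * (k - 1) - 1 = k * (k - 2) + (k - 1) := by omega
  have hdiv : (k * (k - 1) - 1) / k = k - 2 := by
    rw [hlast, Nat.mul_add_div (NeZero.pos k), Nat.div_eq_of_lt (by omega), add_zero]
  funext i; match i with
  | 0 =>
    rw [pairLabel_apply_zero, Matrix.cons_val_zero, hlast, Fin.natCast_eq_natCast_iff_modEq,
      Nat.ModEq, Nat.mul_add_mod]
  | 1 =>
    rw [pairLabel_apply_one, Matrix.cons_val_one, Matrix.cons_val_zero, hdiv,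
      show k * (k - 1) - 1 + (k - 1 - (k - 2)) = k * (k - 1) by omega, Fin.natCast_eq_zero]
    exact Nat.dvd_mul_right k (k - 1)

lemma eq_mul_pred_sub_one_of_pairLabel_eq_comp {t : ℕ} (hk : 2 ≤ k) (ht : t < k * (k - 1))
    {π : Fin 2 → Fin 2} (h0 : π 0 = 1) (h1 : π 1 = 0)
    (h : pairLabel k t = pairLabel k 0 ∘ π) :
    t = k * (k - 1) - 1 := by
  refine pairLabel_injOn ht (show k * (k - 1) - 1 < k * (k - 1) by omega) (h.trans ?_)
  rw [pairLabel_mul_pred_sub_one hk]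
  funext i; match i with
  | 0 => simp [h0]
  | 1 => simp [h1]

end PairLabel

theorem majority_distinguishing_K2n_general (n : ℕ) (hn : 3 ≤ n) (k : ℕ)
    (hk : n ≤ k * (k - 1) - 1) :
    ∃ c : Sym2 (Fin 2 ⊕ Fin n) → Fin k,
      IsMajorityEdgeColoring (completeBipartiteGraph (Fin 2) (Fin n)) c ∧
      IsDistinguishingEdgeColoring (completeBipartiteGraph (Fin 2) (Fin n)) c := by
  have hk3 : 3 ≤ k := by
    by_contra! h
    interval_cases k <;> omega
  have : NeZero k := ⟨by omega⟩
  have hlabel (j : Fin n) : (j : ℕ) < k * (k - 1) := by omega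
  let f (j : Fin n) : Fin 2 → Fin k := pairLabel k j
  refine ⟨bipartiteEdgeColoring 0 f, ?_, ?_⟩
  · refine isMajorityEdgeColoring_bipartiteEdgeColoring 0 f (fun i x => ?_) (fun j x => ?_)
    · calc 2 * #{j | f j i = x}
          ≤ 2 * ((n + k - 1) / k) := Nat.mul_le_mul_left 2 <| card_filter_le_of_injOn_div
            (NeZero.pos k) (pairLabel k · i) (fun _ _ => eq_of_pairLabel_apply_eq_of_div_eq i) x
        _ ≤ n := two_mul_add_sub_one_div_le hn hk3
        _ = Fintype.card (Fin n) := (Fintype.card_fin n).symm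
    · simpa using Nat.mul_le_mul_left 2
        (card_filter_le_one_of_fin_two (pairLabel_zero_ne_one (hlabel j)) x)
  · refine isDistinguishingEdgeColoring_bipartiteEdgeColoring 0 f
      (by simp only [Fintype.card_fin]; omega)
      (fun j t h => Fin.ext (pairLabel_injOn (hlabel j) (hlabel t) h)) fun π hπ hrows => ?_
    refine (Fin.eq_id_or_swap_of_injective hπ).resolve_right fun ⟨h0, h1⟩ => ?_
    obtain ⟨t, ht⟩ := hrows ⟨0, by omega⟩
    have := eq_mul_pred_sub_one_of_pairLabel_eq_comp (by omega) (hlabel t) h0 h1 ht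
    omega

/-- For `n ≥ 3`, `M'_D(K_{2,n}) ≤ min {k ∈ ℕ : k(k-1) - 1 ≥ n}`: if `k` is the least
natural number with `k(k-1) - 1 ≥ n`, then `K_{2,n}` has a majority distinguishing
edge coloring with `k` colors. -/
theorem majority_distinguishing_K2n (n : ℕ) (hn : 3 ≤ n) (k : ℕ)
    (hk : n ≤ k * (k - 1) - 1) (hkmin : ∀ j : ℕ, n ≤ j * (j - 1) - 1 → k ≤ j) :
    ∃ c : Sym2 (Fin 2 ⊕ Fin n) → Fin k,
      IsMajorityEdgeColoring (completeBipartiteGraph (Fin 2) (Fin n)) c ∧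
      IsDistinguishingEdgeColoring (completeBipartiteGraph (Fin 2) (Fin n)) c :=
  majority_distinguishing_K2n_general n hn k hk
end

section
/- Every finite bipartite simple graph of minimum degree at least 2 has a majority edge coloring with 3 colors. -/
/-!
A longest trail contains every edge at its two ends. Orienting it along its traversal and
recursing on the remaining edges therefore gives an orientation of any finite loopless edge set
in which in- and out-degree differ by at most one at every vertex: the trail itself is balanced
except at its endpoints, and these meet no further edges. In a bipartite graph, colouring each
edge by the side of its tail turns such an orientation into a 2-colouring balanced at every
vertex. Recolouring the edges of colours `α, β` by such a 2-colouring strictly decreases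
`∑ v, ∑ γ, d_γ(v) ^ 2` (`d_γ(v)` the number of edges of colour `γ` at `v`) as soon as some
`d_α(v) ≥ d_β(v) + 2`, so a minimiser is equitable; with three colours and minimum degree at
least two, an equitable colouring is a majority colouring.
-/

open SimpleGraph

open Finset

namespace SimpleGraph.Walk

variable {V : Type*} {G : SimpleGraph V}

lemma IsTrail.mem_edges_of_forall_length_le {u v : V} {p : G.Walk u v} (hp : p.IsTrail)
    (hmax : ∀ (x y : V) (q : G.Walk x y), q.IsTrail → q.length ≤ p.length) {e : Sym2 V}
    (he : e ∈ G.edgeSet) (hue : u ∈ e ∨ v ∈ e) : e ∈ p.edges := by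
  have hstart : ∀ {a b : V} (q : G.Walk a b), q.IsTrail → q.length = p.length → a ∈ e →
      e ∈ q.edges := by
    intro a b q hq hlen ha
    rw [← Sym2.other_spec ha] at he ⊢
    by_contra h
    have := hmax _ _ (cons (G.mem_edgeSet.1 he).symm q)
      ((isTrail_cons _ _).2 ⟨hq, by rwa [Sym2.eq_swap]⟩)
    simp [hlen] at this
  rcases hue with hu | hv
  · exact hstart p hp rfl hu
  · simpa using hstart p.reverse hp.reverse (length_reverse p) hv

lemma length_pos_of_forall_length_le {u v : V} {p : G.Walk u v}
    (hmax : ∀ (x y : V) (q : G.Walk x y), q.IsTrail → q.length ≤ p.length) {a b : V}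
    (hab : G.Adj a b) : 0 < p.length :=
  hmax _ _ hab.toWalk (by simp [isTrail_def, hab.edges_toWalk])

end SimpleGraph.Walk

section Orientation

variable {V : Type*} [DecidableEq V]

/- An orientation of a set of edges is encoded by a map `o : Sym2 V → V` choosing the tail
`o e ∈ e` of each edge. -/
def outDegree (o : Sym2 V → V) (E : Finset (Sym2 V)) (w : V) : ℕ := #{e ∈ E | w ∈ e ∧ o e = w}

def inDegree (o : Sym2 V → V) (E : Finset (Sym2 V)) (w : V) : ℕ := #{e ∈ E | w ∈ e ∧ o e ≠ w}

def IsBalancedOrientation (o : Sym2 V → V) (E : Finset (Sym2 V)) : Prop :=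
  ∀ w, outDegree o E w ≤ inDegree o E w + 1 ∧ inDegree o E w ≤ outDegree o E w + 1

lemma outDegree_congr {o o' : Sym2 V → V} {E : Finset (Sym2 V)} (h : ∀ e ∈ E, o e = o' e)
    (w : V) : outDegree o E w = outDegree o' E w := by
  unfold outDegree
  rw [filter_congr fun e he => by rw [h e he]]

lemma inDegree_congr {o o' : Sym2 V → V} {E : Finset (Sym2 V)} (h : ∀ e ∈ E, o e = o' e)
    (w : V) : inDegree o E w = inDegree o' E w := by
  unfold inDegree
  rw [filter_congr fun e he => by rw [h e he]]

lemma outDegree_union (o : Sym2 V → V) {A B : Finset (Sym2 V)} (h : Disjoint A B) (w : V) :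
    outDegree o (A ∪ B) w = outDegree o A w + outDegree o B w := by
  rw [outDegree, filter_union, card_union_of_disjoint (disjoint_filter_filter h)]; rfl

lemma inDegree_union (o : Sym2 V → V) {A B : Finset (Sym2 V)} (h : Disjoint A B) (w : V) :
    inDegree o (A ∪ B) w = inDegree o A w + inDegree o B w := by
  rw [inDegree, filter_union, card_union_of_disjoint (disjoint_filter_filter h)]; rfl

lemma outDegree_insert (o : Sym2 V → V) {E : Finset (Sym2 V)} {e : Sym2 V} (he : e ∉ E) (w : V) :
    outDegree o (insert e E) w = outDegree o E w + if w ∈ e ∧ o e = w then 1 else 0 := by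
  rw [outDegree, filter_insert]
  split_ifs <;> simp_all [outDegree]

lemma inDegree_insert (o : Sym2 V → V) {E : Finset (Sym2 V)} {e : Sym2 V} (he : e ∉ E) (w : V) :
    inDegree o (insert e E) w = inDegree o E w + if w ∈ e ∧ o e ≠ w then 1 else 0 := by
  rw [inDegree, filter_insert]
  split_ifs <;> simp_all [inDegree]

namespace SimpleGraph.Walk

variable {G : SimpleGraph V}

def orient : {u v : V} → G.Walk u v → (Sym2 V → V) → Sym2 V → V
  | _, _, nil, o => o
  | u, _, cons (v := x) _ p, o => Function.update (p.orient o) s(u, x) u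

lemma orient_mem {o : Sym2 V → V} (ho : ∀ e, o e ∈ e) {u v : V} (p : G.Walk u v) (e : Sym2 V) :
    p.orient o e ∈ e := by
  induction p with
  | nil => exact ho e
  | cons _ p ih =>
    rw [orient, Function.update_apply]
    split_ifs with h
    · simp [h]
    · exact ih

lemma orient_of_notMem_edges (o : Sym2 V → V) {u v : V} (p : G.Walk u v) {e : Sym2 V}
    (he : e ∉ p.edges) : p.orient o e = o e := by
  induction p with
  | nil => rfl
  | cons _ p ih =>
    rw [edges_cons, List.mem_cons, not_or] at he
    rw [orient, Function.update_of_ne he.1, ih he.2]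

lemma IsTrail.outDegree_orient_add {o : Sym2 V → V} {u v : V} {p : G.Walk u v} (hp : p.IsTrail)
    (w : V) :
    outDegree (p.orient o) p.edges.toFinset w + (if w = v then 1 else 0) =
      inDegree (p.orient o) p.edges.toFinset w + (if w = u then 1 else 0) := by
  induction p with
  | nil => simp [outDegree, inDegree]
  | @cons u x v h p ih =>
    rw [isTrail_cons] at hp
    have hnew : s(u, x) ∉ p.edges.toFinset := by simpa using hp.2
    have hagree : ∀ e ∈ p.edges.toFinset, (cons h p).orient o e = p.orient o e := fun e he =>
      Function.update_of_ne (ne_of_mem_of_not_mem he hnew) _ _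
    rw [edges_cons, List.toFinset_cons, outDegree_insert _ hnew, inDegree_insert _ hnew,
      outDegree_congr hagree, inDegree_congr hagree]
    have := ih hp.1
    have hux := h.ne
    simp only [orient, Function.update_self, Sym2.mem_iff]
    clear hagree ih
    split_ifs <;> subst_vars <;> simp_all

lemma IsTrail.isBalancedOrientation_orient_union {o : Sym2 V → V} {u v : V} {p : G.Walk u v}
    (hp : p.IsTrail) {E : Finset (Sym2 V)} (hdisj : Disjoint E p.edges.toFinset)
    (hends : ∀ e ∈ E, u ∉ e ∧ v ∉ e) (hE : IsBalancedOrientation o E) :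
    IsBalancedOrientation (p.orient o) (E ∪ p.edges.toFinset) := by
  intro w
  have hagree : ∀ e ∈ E, p.orient o e = o e := fun e he =>
    orient_of_notMem_edges o p fun h => Finset.disjoint_left.1 hdisj he (List.mem_toFinset.2 h)
  rw [outDegree_union _ hdisj, inDegree_union _ hdisj, outDegree_congr hagree,
    inDegree_congr hagree]
  have htrail := hp.outDegree_orient_add (o := o) w
  have := hE w
  by_cases hw : w = u ∨ w = v
  · have hw' : ∀ e ∈ E, w ∉ e := fun e he => by rcases hw with rfl | rfl <;> simp [hends e he]
    have hzero : outDegree o E w = 0 ∧ inDegree o E w = 0 := by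
      simp only [outDegree, inDegree, card_eq_zero, filter_eq_empty_iff]
      exact ⟨fun e he h => hw' e he h.1, fun e he h => hw' e he h.1⟩
    split_ifs at htrail <;> omega
  · rw [not_or] at hw
    rw [if_neg hw.1, if_neg hw.2] at htrail
    omega

end SimpleGraph.Walk

open SimpleGraph.Walk in
theorem Finset.exists_balanced_orientation (E : Finset (Sym2 V)) (hE : ∀ e ∈ E, ¬ e.IsDiag) :
    ∃ o : Sym2 V → V, (∀ e, o e ∈ e) ∧ IsBalancedOrientation o E := by
  induction E using Finset.strongInduction with
  | H E ih =>
  rcases E.eq_empty_or_nonempty with rfl | ⟨e₀, he₀⟩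
  · exact ⟨fun e => e.out.1, Sym2.out_fst_mem, fun w => by
      simp [outDegree, inDegree]⟩
  let H := fromEdgeSet (E : Set (Sym2 V))
  have hHE : ∀ e ∈ E, e ∈ H.edgeSet := fun e he => by simp [H, he, hE e he]
  have : Finite H.edgeSet := (E.finite_toSet.subset (by simp [H, edgeSet_fromEdgeSet])).to_subtype
  have : Nonempty V := ⟨e₀.out.1⟩
  obtain ⟨u, v, p, hp, hmax⟩ := exists_isTrail_forall_isTrail_length_le_length H
  set P := p.edges.toFinset
  have hPE : P ⊆ E := fun e he => by
    have := p.edges_subset_edgeSet (List.mem_toFinset.1 he)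
    simp [H, edgeSet_fromEdgeSet] at this
    exact this.1
  have hP : P.Nonempty := by
    induction e₀ using Sym2.ind with
    | _ a b =>
    rw [List.toFinset_nonempty_iff, ← List.length_pos_iff, length_edges]
    exact length_pos_of_forall_length_le hmax (hHE _ he₀)
  obtain ⟨o', ho', hbal⟩ := ih (E \ P) (sdiff_ssubset hPE hP) fun e he => hE e (mem_sdiff.1 he).1
  refine ⟨p.orient o', orient_mem ho' p, ?_⟩
  rw [← sdiff_union_of_subset hPE]
  refine hp.isBalancedOrientation_orient_union sdiff_disjoint (fun e he => ?_) hbal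
  rw [mem_sdiff, List.mem_toFinset] at he
  exact not_or.1 (mt (hp.mem_edges_of_forall_length_le hmax (hHE e he.1)) he.2)

theorem SimpleGraph.IsBipartite.exists_balanced_bicoloring {G : SimpleGraph V} (hG : G.IsBipartite)
    (E : Finset (Sym2 V)) (hE : ↑E ⊆ G.edgeSet) :
    ∃ σ : Sym2 V → Bool, ∀ w,
      #{e ∈ E | w ∈ e ∧ σ e} ≤ #{e ∈ E | w ∈ e ∧ ¬σ e} + 1 ∧
        #{e ∈ E | w ∈ e ∧ ¬σ e} ≤ #{e ∈ E | w ∈ e ∧ σ e} + 1 := by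
  obtain ⟨b⟩ := hG
  let b := G.recolorOfEquiv finTwoEquiv b
  obtain ⟨o, ho, hbal⟩ :=
    E.exists_balanced_orientation fun e he => G.not_isDiag_of_mem_edgeSet (hE he)
  refine ⟨fun e => b (o e), fun w => ?_⟩
  have hside : ∀ e ∈ E, w ∈ e → (b (o e) = b w ↔ o e = w) := by
    intro e he hw
    refine ⟨fun h => ?_, fun h => by rw [h]⟩
    by_contra hne
    have hadj : G.Adj w (o e) := by
      rw [← G.mem_edgeSet, ← (Sym2.mem_and_mem_iff (Ne.symm hne)).1 ⟨hw, ho e⟩]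
      exact hE he
    exact b.valid hadj h.symm
  have hout : #{e ∈ E | w ∈ e ∧ b (o e) = b w} = outDegree o E w :=
    congrArg card (filter_congr fun e he => and_congr_right (hside e he))
  have hin : #{e ∈ E | w ∈ e ∧ b (o e) ≠ b w} = inDegree o E w :=
    congrArg card (filter_congr fun e he => and_congr_right fun hw => not_congr (hside e he hw))
  have := hbal w
  cases hbw : b w <;>
    simp only [hbw, ne_eq, Bool.not_eq_true, Bool.not_eq_false] at hout hin ⊢ <;> omega

end Orientation

lemma Nat.sq_add_sq_le_of_add_eq {a b a' b' : ℕ} (h : a' + b' = a + b) (ha : a' ≤ b' + 1)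
    (hb : b' ≤ a' + 1) : a' ^ 2 + b' ^ 2 ≤ a ^ 2 + b ^ 2 := by
  obtain h' | h' | h' : a' = b' ∨ a' = b' + 1 ∨ b' = a' + 1 := by omega
  all_goals subst h'; rcases lt_trichotomy a b with hab | hab | hab <;> nlinarith

lemma Nat.sq_add_sq_lt_of_add_eq {a b a' b' : ℕ} (h : a' + b' = a + b) (ha : a' ≤ b' + 1)
    (hb : b' ≤ a' + 1) (hab : b + 2 ≤ a) : a' ^ 2 + b' ^ 2 < a ^ 2 + b ^ 2 := by
  obtain h' | h' | h' : a' = b' ∨ a' = b' + 1 ∨ b' = a' + 1 := by omega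
  all_goals subst h'; nlinarith

namespace SimpleGraph

variable {V : Type*} [Fintype V] [DecidableEq V] (G : SimpleGraph V) [DecidableRel G.Adj] {k : ℕ}

def colorDegree (c : Sym2 V → Fin k) (u : V) (α : Fin k) : ℕ := #{e ∈ G.incidenceFinset u | c e = α}

def IsEquitableEdgeColoring (c : Sym2 V → Fin k) : Prop :=
  ∀ u α β, G.colorDegree c u α ≤ G.colorDegree c u β + 1

lemma sum_colorDegree (c : Sym2 V → Fin k) (u : V) : ∑ α, G.colorDegree c u α = G.degree u := by
  rw [← card_incidenceFinset_eq_degree, card_eq_sum_card_fiberwise fun e _ => mem_univ (c e)]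
  rfl

lemma card_filter_neighborFinset (u : V) (P : Sym2 V → Prop) [DecidablePred P] :
    #{v ∈ G.neighborFinset u | P s(u, v)} = #{e ∈ G.incidenceFinset u | P e} := by
  refine card_nbij (s(u, ·)) (fun v hv => ?_) (fun v _ w _ h => Sym2.congr_right.1 h) fun e he => ?_
  · simp only [coe_filter, Set.mem_ofPred_eq, mem_neighborFinset, mem_incidenceFinset] at hv ⊢
    exact ⟨⟨hv.1, Sym2.mem_mk_left u v⟩, hv.2⟩
  · simp only [coe_filter, Set.mem_ofPred_eq, mem_incidenceFinset] at he
    obtain ⟨⟨he, hu⟩, hP⟩ := he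
    rw [← Sym2.other_spec hu] at he hP
    exact ⟨Sym2.Mem.other hu, mem_filter.2 ⟨(G.mem_neighborFinset _ _).2 he, hP⟩,
      Sym2.other_spec hu⟩

lemma isMajorityEdgeColoring_iff (c : Sym2 V → Fin k) :
    IsMajorityEdgeColoring G c ↔ ∀ u α, 2 * G.colorDegree c u α ≤ G.degree u := by
  refine forall₂_congr fun u α => ?_
  rw [colorDegree, ← card_filter_neighborFinset]

variable {G}

lemma IsBipartite.exists_rebalance_colorDegree (hG : G.IsBipartite) (c : Sym2 V → Fin k)
    {α β : Fin k} (hαβ : α ≠ β) :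
    ∃ c' : Sym2 V → Fin k, ∀ w,
      (∀ γ, γ ≠ α → γ ≠ β → G.colorDegree c' w γ = G.colorDegree c w γ) ∧
      G.colorDegree c' w α + G.colorDegree c' w β = G.colorDegree c w α + G.colorDegree c w β ∧
      G.colorDegree c' w α ≤ G.colorDegree c' w β + 1 ∧
      G.colorDegree c' w β ≤ G.colorDegree c' w α + 1 := by
  let E := {e ∈ G.edgeFinset | c e = α ∨ c e = β}
  obtain ⟨σ, hσ⟩ := hG.exists_balanced_bicoloring E fun e he => mem_edgeFinset.1 (mem_filter.1 he).1
  let c' e := if c e = α ∨ c e = β then (if σ e then α else β) else c e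
  have hc'α : ∀ e, c' e = α ↔ (c e = α ∨ c e = β) ∧ σ e := by
    intro e; by_cases h : c e = α ∨ c e = β <;> by_cases hσe : σ e <;> simp_all [c', Ne.symm hαβ]
  have hc'β : ∀ e, c' e = β ↔ (c e = α ∨ c e = β) ∧ ¬σ e := by
    intro e; by_cases h : c e = α ∨ c e = β <;> by_cases hσe : σ e <;> simp_all [c']
  refine ⟨c', fun w => ?_⟩
  have hcd : ∀ (c : Sym2 V → Fin k) γ,
      G.colorDegree c w γ = #{e ∈ G.edgeFinset | w ∈ e ∧ c e = γ} := fun c γ => by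
    rw [colorDegree, incidenceFinset_eq_filter, filter_filter]
  have hcd_add : ∀ c : Sym2 V → Fin k, G.colorDegree c w α + G.colorDegree c w β =
      #{e ∈ G.edgeFinset | w ∈ e ∧ (c e = α ∨ c e = β)} := fun c => by
    rw [hcd, hcd, ← card_union_of_disjoint, ← filter_or]
    · simp only [and_or_left]
    · exact disjoint_filter.2 fun e _ h h' => hαβ (h.2.symm.trans h'.2)
  have hα : G.colorDegree c' w α = #{e ∈ E | w ∈ e ∧ σ e} := by
    rw [hcd, filter_filter]
    exact congrArg card (filter_congr fun e _ => by rw [hc'α]; tauto)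
  have hβ : G.colorDegree c' w β = #{e ∈ E | w ∈ e ∧ ¬σ e} := by
    rw [hcd, filter_filter]
    exact congrArg card (filter_congr fun e _ => by rw [hc'β]; tauto)
  refine ⟨fun γ hγα hγβ => ?_, ?_, by rw [hα, hβ]; exact (hσ w).1, by rw [hα, hβ]; exact (hσ w).2⟩
  · rw [hcd, hcd]
    exact congrArg card (filter_congr fun e _ => by
      by_cases h : c e = α ∨ c e = β <;> by_cases hσe : σ e <;> grind)
  · rw [hcd_add, hcd_add]
    exact congrArg card (filter_congr fun e _ => by rw [hc'α, hc'β]; tauto)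

lemma IsBipartite.exists_sum_sq_colorDegree_lt (hG : G.IsBipartite) (c : Sym2 V → Fin k)
    {u : V} {α β : Fin k} (h : G.colorDegree c u β + 2 ≤ G.colorDegree c u α) :
    ∃ c' : Sym2 V → Fin k,
      ∑ w, ∑ γ, G.colorDegree c' w γ ^ 2 < ∑ w, ∑ γ, G.colorDegree c w γ ^ 2 := by
  have hαβ : α ≠ β := by rintro rfl; omega
  obtain ⟨c', hc'⟩ := hG.exists_rebalance_colorDegree c hαβ
  have hsplit : ∀ g : Fin k → ℕ, ∑ γ, g γ = g α + g β + ∑ γ ∈ {α, β}ᶜ, g γ := fun g => by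
    rw [← sum_add_sum_compl {α, β}, sum_pair hαβ]
  have hrest : ∀ w, ∑ γ ∈ {α, β}ᶜ, G.colorDegree c' w γ ^ 2 =
      ∑ γ ∈ {α, β}ᶜ, G.colorDegree c w γ ^ 2 := fun w => sum_congr rfl fun γ hγ => by
    simp only [mem_compl, mem_insert, mem_singleton, not_or] at hγ
    rw [(hc' w).1 γ hγ.1 hγ.2]
  refine ⟨c', sum_lt_sum (fun w _ => ?_) ⟨u, mem_univ u, ?_⟩⟩
  · obtain ⟨-, hsum, h₁, h₂⟩ := hc' w
    rw [hsplit, hsplit, hrest]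
    linarith [Nat.sq_add_sq_le_of_add_eq hsum h₁ h₂]
  · obtain ⟨-, hsum, h₁, h₂⟩ := hc' u
    rw [hsplit, hsplit, hrest]
    linarith [Nat.sq_add_sq_lt_of_add_eq hsum h₁ h₂ h]

theorem IsBipartite.exists_isEquitableEdgeColoring (hG : G.IsBipartite) (k : ℕ) [NeZero k] :
    ∃ c : Sym2 V → Fin k, G.IsEquitableEdgeColoring c := by
  obtain ⟨c, hc⟩ := Finite.exists_min fun c : Sym2 V → Fin k => ∑ w, ∑ γ, G.colorDegree c w γ ^ 2
  refine ⟨c, fun u α β => ?_⟩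
  by_contra! h
  obtain ⟨c', hc'⟩ := hG.exists_sum_sq_colorDegree_lt c
    (by omega : G.colorDegree c u β + 2 ≤ G.colorDegree c u α)
  exact (hc c').not_gt hc'

lemma IsEquitableEdgeColoring.isMajorityEdgeColoring {c : Sym2 V → Fin 3}
    (hc : G.IsEquitableEdgeColoring c) (hδ : ∀ v, 2 ≤ G.degree v) : IsMajorityEdgeColoring G c := by
  rw [isMajorityEdgeColoring_iff]
  intro u α
  have hsum := G.sum_colorDegree c u
  rw [Fin.sum_univ_three] at hsum
  have := hδ u
  have h01 := hc u 0 1; have h02 := hc u 0 2; have h10 := hc u 1 0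
  have h12 := hc u 1 2; have h20 := hc u 2 0; have h21 := hc u 2 1
  fin_cases α <;> simp only [Fin.zero_eta, Fin.mk_one, Fin.reduceFinMk] <;> omega

end SimpleGraph

/-- Every finite bipartite graph of minimum degree at least 2 has a majority edge
3-coloring. -/
theorem majority_three_colors_of_bipartite {V : Type*} [Fintype V] [DecidableEq V]
    (G : SimpleGraph V) [DecidableRel G.Adj]
    (hbip : ∃ s : Set V, ∀ u v : V, G.Adj u v → (u ∈ s ∧ v ∉ s) ∨ (u ∉ s ∧ v ∈ s))
    (hδ : ∀ v : V, 2 ≤ G.degree v) :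
    ∃ c : Sym2 V → Fin 3, IsMajorityEdgeColoring G c := by
  obtain ⟨s, hs⟩ := hbip
  have hG : G.IsBipartite := IsBipartiteWith.isBipartite (s := s) (t := sᶜ)
    ⟨disjoint_compl_right, fun u v huv => hs u v huv⟩
  obtain ⟨c, hc⟩ := hG.exists_isEquitableEdgeColoring 3
  exact ⟨c, hc.isMajorityEdgeColoring hδ⟩
end

section
/- Every finite simple graph of minimum degree at least 2 has a majority edge coloring with 4 colors. -/
/-!
Split every vertex `u` into `⌊deg u / 2⌋` pieces and hand each piece two or three of the edges
at `u`. The resulting graph has maximum degree at most three, so its edges can be properly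
coloured with four colours; pulled back to `G`, a colour occurs at `u` at most once per piece,
that is at most `⌊deg u / 2⌋` times.

Four colours suffice for maximum degree three by induction on the edges: delete a vertex `v`
and colour the rest. Each of the at most three neighbours of `v` then misses at least two
colours, and Hall's theorem gives them distinct missing colours unless all three miss the same
pair `{a, b}`. In that case the `(a, d)`-Kempe chains are paths, so two of the neighbours lie
on different chains, and swapping `a` and `d` on one of these chains frees a third colour.
-/

open SimpleGraph

open Finset

theorem Finset.forall_mem_pair_of_card_biUnion_lt {ι α : Type*} [DecidableEq α]
    {N : Finset ι} {M : ι → Finset α} (hM : ∀ y ∈ N, 2 ≤ #(M y)) (hN : #N ≤ 3)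
    (h : #(N.biUnion M) < #N) :
    #N = 3 ∧ ∃ a b, a ≠ b ∧ ∀ y ∈ N, a ∈ M y ∧ b ∈ M y := by
  obtain ⟨y₀, hy₀⟩ : N.Nonempty := card_pos.1 (by omega)
  have h2 := (hM y₀ hy₀).trans (card_le_card (subset_biUnion_of_mem M hy₀))
  obtain ⟨a, b, hab, hU⟩ := card_eq_two.1 (show #(N.biUnion M) = 2 by omega)
  refine ⟨by omega, a, b, hab, fun y hy => ?_⟩
  have hMy : M y = N.biUnion M :=
    eq_of_subset_of_card_le (subset_biUnion_of_mem M hy) (by have := hM y hy; omega)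
  simp [hMy, hU]

theorem Finset.exists_fin_half_fiber_card_le_three {β : Type*} (s : Finset β) (hs : 2 ≤ #s) :
    ∃ f : β → Fin (#s / 2), ∀ i, #{b ∈ s | f b = i} ≤ 3 := by
  classical
  let idx (b : β) : ℕ := if h : b ∈ s then s.equivFin ⟨b, h⟩ else 0
  have hidx : Set.InjOn idx s := fun b hb b' hb' h => by
    simpa [idx, dif_pos (mem_coe.1 hb), dif_pos (mem_coe.1 hb'), Fin.val_inj] using h
  -- the `j`-th element of `s` goes to piece `j / 2`, except that a last odd one joins the last pair
  let f (b : β) : Fin (#s / 2) := ⟨min (idx b / 2) (#s / 2 - 1), by omega⟩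
  refine ⟨f, fun i => ?_⟩
  have hmaps : ∀ b ∈ {b ∈ s | f b = i}, idx b ∈ Icc (2 * (i : ℕ)) (2 * i + 2) := by
    intro b hb
    obtain ⟨hb, hbi⟩ := mem_filter.1 hb
    have := (s.equivFin ⟨b, hb⟩).2
    simp only [Fin.ext_iff, f, idx, dif_pos hb] at hbi ⊢
    rw [mem_Icc]
    omega
  calc #{b ∈ s | f b = i} ≤ #(Icc (2 * (i : ℕ)) (2 * i + 2)) :=
        card_le_card_of_injOn idx hmaps (hidx.mono (coe_subset.2 (filter_subset _ s)))
    _ = 3 := by rw [Nat.card_Icc]; omega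

namespace SimpleGraph

variable {V α : Type*}

def IsProperEdgeColoring (G : SimpleGraph V) (c : Sym2 V → α) : Prop :=
  ∀ ⦃x y z⦄, G.Adj x y → G.Adj x z → c s(x, y) = c s(x, z) → y = z

theorem IsProperEdgeColoring.mono {G H : SimpleGraph V} {c : Sym2 V → α}
    (hc : G.IsProperEdgeColoring c) (hle : H ≤ G) : H.IsProperEdgeColoring c :=
  fun _ _ _ hy hz => hc (hle hy) (hle hz)

theorem IsProperEdgeColoring.degree_le_card {G : SimpleGraph V} {x : V}
    [Fintype (G.neighborSet x)] {c : Sym2 V → α} (hc : G.IsProperEdgeColoring c)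
    {T : Finset α} (hT : ∀ y, G.Adj x y → c s(x, y) ∈ T) : G.degree x ≤ #T :=
  card_le_card_of_injOn (fun y => c s(x, y)) (fun y hy => hT y (by simpa using hy))
    fun _ hy _ hz h => hc (by simpa using hy) (by simpa using hz) h

section MissingColors

variable [Fintype α] {G : SimpleGraph V}

open Classical in
noncomputable def missingColors (G : SimpleGraph V) (c : Sym2 V → α) (x : V) : Finset α :=
  {a | ∀ y, G.Adj x y → c s(x, y) ≠ a}

theorem mem_missingColors {c : Sym2 V → α} {x : V} {a : α} :
    a ∈ G.missingColors c x ↔ ∀ y, G.Adj x y → c s(x, y) ≠ a := by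
  simp [missingColors]

theorem card_sub_degree_le_card_missingColors {x : V} [Fintype (G.neighborSet x)]
    [DecidableEq α] (c : Sym2 V → α) :
    Fintype.card α - G.degree x ≤ #(G.missingColors c x) := by
  have hsub : (G.missingColors c x)ᶜ ⊆ (G.neighborFinset x).image fun y => c s(x, y) := by
    intro a ha
    simp only [mem_compl, mem_missingColors, not_forall, not_not] at ha
    obtain ⟨y, hy, rfl⟩ := ha
    exact mem_image_of_mem _ ((G.mem_neighborFinset x y).2 hy)
  have hcard := (card_le_card hsub).trans card_image_le
  rw [card_compl, card_neighborFinset_eq_degree] at hcard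
  omega

end MissingColors

def kempeGraph (G : SimpleGraph V) (c : Sym2 V → α) (a b : α) : SimpleGraph V where
  Adj x y := G.Adj x y ∧ (c s(x, y) = a ∨ c s(x, y) = b)
  symm.symm x y h := by rwa [G.adj_comm, Sym2.eq_swap]
  loopless.irrefl x h := G.loopless.irrefl x h.1

theorem kempeGraph_le (G : SimpleGraph V) (c : Sym2 V → α) (a b : α) :
    G.kempeGraph c a b ≤ G :=
  fun _ _ h => h.1

open Classical in
noncomputable def kempeSwap [DecidableEq α] (G : SimpleGraph V) (c : Sym2 V → α) (a b : α)
    (p : V) : Sym2 V → α :=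
  fun e => if ∃ x ∈ e, (G.kempeGraph c a b).Reachable p x then Equiv.swap a b (c e) else c e

section KempeSwap

variable [DecidableEq α] {G : SimpleGraph V} {c : Sym2 V → α} {a b : α} {p x y : V}

theorem kempeSwap_of_reachable (hx : (G.kempeGraph c a b).Reachable p x) :
    G.kempeSwap c a b p s(x, y) = Equiv.swap a b (c s(x, y)) :=
  if_pos ⟨x, Sym2.mem_mk_left x y, hx⟩

theorem kempeSwap_of_not_reachable (hx : ¬(G.kempeGraph c a b).Reachable p x)
    (hxy : G.Adj x y) : G.kempeSwap c a b p s(x, y) = c s(x, y) := by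
  classical
  rw [kempeSwap, ite_eq_right_iff]
  rintro ⟨w, hw, hpw⟩
  obtain rfl | rfl := Sym2.mem_iff.1 hw
  · exact absurd hpw hx
  · refine Equiv.swap_apply_of_ne_of_ne ?_ ?_ <;> intro hcol <;>
      exact hx (hpw.trans (Adj.reachable ⟨hxy.symm, by rw [Sym2.eq_swap]; tauto⟩))

theorem IsProperEdgeColoring.kempeSwap (hc : G.IsProperEdgeColoring c) :
    G.IsProperEdgeColoring (G.kempeSwap c a b p) := by
  intro x y z hy hz h
  by_cases hx : (G.kempeGraph c a b).Reachable p x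
  · rw [kempeSwap_of_reachable hx, kempeSwap_of_reachable hx] at h
    exact hc hy hz ((Equiv.swap a b).injective h)
  · rw [kempeSwap_of_not_reachable hx hy, kempeSwap_of_not_reachable hx hz] at h
    exact hc hy hz h

theorem mem_missingColors_kempeSwap_of_reachable [Fintype α]
    (hx : (G.kempeGraph c a b).Reachable p x) {d : α} :
    d ∈ G.missingColors (G.kempeSwap c a b p) x ↔ Equiv.swap a b d ∈ G.missingColors c x := by
  simp only [mem_missingColors, kempeSwap_of_reachable hx, ne_eq, Equiv.swap_apply_eq_iff]

theorem missingColors_kempeSwap_of_not_reachable [Fintype α]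
    (hx : ¬(G.kempeGraph c a b).Reachable p x) :
    G.missingColors (G.kempeSwap c a b p) x = G.missingColors c x := by
  ext d
  simp only [mem_missingColors]
  exact forall_congr' fun y => imp_congr_right fun hxy => by
    rw [kempeSwap_of_not_reachable hx hxy]

end KempeSwap

/-- The component `C` of `x` is connected, so it has at least `|C| - 1` edges, i.e. `2|C| - 2`
edge ends; degrees at most two, three of them at most one, leave at most `2|C| - 3`. -/
theorem not_reachable_of_degree_le_one [Fintype V] {K : SimpleGraph V} [DecidableRel K.Adj]
    (hK : ∀ w, K.degree w ≤ 2) {x y z : V} (hxy : x ≠ y) (hxz : x ≠ z) (hyz : y ≠ z)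
    (hx : K.degree x ≤ 1) (hy : K.degree y ≤ 1) (hz : K.degree z ≤ 1) (hr : K.Reachable x y) :
    ¬K.Reachable x z := by
  classical
  intro hr'
  set C := K.connectedComponentMk x
  have hdeg (w : C.supp) : (K.induce C.supp).degree w = K.degree w :=
    degree_induce_of_neighborSet_subset fun _ hu => C.mem_supp_of_adj_mem_supp w.2 hu
  let T : Finset C.supp := {⟨x, rfl⟩, ⟨y, (ConnectedComponent.sound hr).symm⟩,
    ⟨z, (ConnectedComponent.sound hr').symm⟩}
  have hT : #T = 3 := by
    rw [card_insert_of_notMem (by simp [Subtype.ext_iff, hxy, hxz]),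
      card_pair (by simp [Subtype.ext_iff, hyz])]
  have hsum : ∑ w, (K.induce C.supp).degree w + 3 ≤ 2 * Fintype.card C.supp :=
    calc ∑ w, (K.induce C.supp).degree w + 3
        = ∑ w, ((K.induce C.supp).degree w + if w ∈ T then 1 else 0) := by
          rw [sum_add_distrib, sum_boole, ← hT]
          simp
      _ ≤ ∑ _w : C.supp, 2 := sum_le_sum fun w _ => by
          rw [hdeg]
          split_ifs with hw
          · simp only [T, mem_insert, mem_singleton] at hw
            rcases hw with rfl | rfl | rfl <;> dsimp only <;> omega
          · linarith [hK w]
      _ = 2 * Fintype.card C.supp := by rw [sum_const, card_univ, smul_eq_mul, mul_comm]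
  have hconn := C.maximal_connected_induce_supp.1.card_vert_le_card_edgeSet_add_one
  rw [Nat.card_eq_fintype_card, Nat.card_eq_fintype_card, ← edgeFinset_card] at hconn
  rw [sum_degrees_eq_twice_card_edges] at hsum
  omega

def extendColoring [DecidableEq V] (c : Sym2 V → α) (v : V) (g : V → α) : Sym2 V → α :=
  Sym2.lift ⟨fun x y => if x = v then g y else if y = v then g x else c s(x, y), fun x y => by
    dsimp only
    split_ifs <;> simp_all [Sym2.eq_swap]⟩

section Extension

variable [DecidableEq V] {G : SimpleGraph V} {v : V}

theorem IsProperEdgeColoring.extendColoring {c : Sym2 V → α}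
    (hc : (G.deleteIncidenceSet v).IsProperEdgeColoring c) {g : V → α}
    (hg : Set.InjOn g (G.neighborSet v))
    (hgc : ∀ y z, G.Adj v y → (G.deleteIncidenceSet v).Adj y z → c s(y, z) ≠ g y) :
    G.IsProperEdgeColoring (extendColoring c v g) := by
  intro x y z hy hz h
  simp only [SimpleGraph.extendColoring, Sym2.lift_mk] at h
  rcases eq_or_ne x v with rfl | hx
  · simp only [if_true] at h
    exact hg hy hz h
  have hdel : ∀ w, G.Adj x w → w ≠ v → (G.deleteIncidenceSet v).Adj x w :=
    fun w hw hwv => deleteIncidenceSet_adj.2 ⟨hw, hx, hwv⟩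
  rw [if_neg hx, if_neg hx] at h
  by_cases hyv : y = v <;> by_cases hzv : z = v
  · rw [hyv, hzv]
  · subst hyv
    rw [if_pos rfl, if_neg hzv] at h
    exact absurd h.symm (hgc x z hy.symm (hdel z hz hzv))
  · subst hzv
    rw [if_pos rfl, if_neg hyv] at h
    exact absurd h (hgc x y hz.symm (hdel y hy hyv))
  · rw [if_neg hyv, if_neg hzv] at h
    exact hc (hdel y hy hyv) (hdel z hz hzv) h

theorem degree_deleteIncidenceSet_add_one_le [Fintype V] [DecidableRel G.Adj] {y : V}
    (hy : G.Adj v y) : (G.deleteIncidenceSet v).degree y + 1 ≤ G.degree y := by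
  have hsub : (G.deleteIncidenceSet v).neighborFinset y ⊆ (G.neighborFinset y).erase v := by
    intro w hw
    rw [mem_neighborFinset, deleteIncidenceSet_adj] at hw
    exact mem_erase.2 ⟨hw.2.2, (G.mem_neighborFinset y w).2 hw.1⟩
  have hcard := card_le_card hsub
  rw [card_erase_of_mem ((G.mem_neighborFinset y v).2 hy.symm)] at hcard
  have := G.degree_pos_iff_exists_adj y |>.2 ⟨v, hy.symm⟩
  simp only [card_neighborFinset_eq_degree] at hcard
  omega

variable [Fintype V] [DecidableRel G.Adj] [Fintype α] [DecidableEq α]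

theorem exists_isProperEdgeColoring_of_le_card_biUnion {c : Sym2 V → α}
    (hc : (G.deleteIncidenceSet v).IsProperEdgeColoring c) (hv : G.degree v ≤ 3)
    (hM : ∀ y, G.Adj v y → 2 ≤ #((G.deleteIncidenceSet v).missingColors c y))
    (hU : G.degree v ≤
      #((G.neighborFinset v).biUnion ((G.deleteIncidenceSet v).missingColors c))) :
    ∃ c' : Sym2 V → α, G.IsProperEdgeColoring c' := by
  set M := (G.deleteIncidenceSet v).missingColors c
  obtain ⟨f, hf, hfM⟩ := (all_card_le_biUnion_card_iff_exists_injective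
      fun y : G.neighborSet v => M y).1 fun s => by
    by_cases hs : s = univ
    · subst hs
      convert hU using 2
      · rw [card_univ, card_neighborSet_eq_degree]
      · ext
        simp
    have hlt : #s < G.degree v := by
      rw [← card_neighborSet_eq_degree, ← card_univ]
      exact card_lt_card (ssubset_univ_iff.2 hs)
    obtain rfl | ⟨y, hy⟩ := s.eq_empty_or_nonempty
    · simp
    calc #s ≤ 2 := by omega
      _ ≤ #(M y) := hM y y.2
      _ ≤ #(s.biUnion fun y => M y) :=
        card_le_card (subset_biUnion_of_mem (fun y : G.neighborSet v => M y) hy)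
  let g y := if h : G.Adj v y then f ⟨y, h⟩ else c s(y, y)
  refine ⟨extendColoring c v g, hc.extendColoring (fun y hy z hz h => ?_) fun y z hy hyz => ?_⟩
  · simp only [g, dif_pos (show G.Adj v y from hy), dif_pos (show G.Adj v z from hz)] at h
    exact congrArg Subtype.val (hf h)
  · simp only [g, dif_pos hy]
    exact mem_missingColors.1 (hfM ⟨y, hy⟩) z hyz

theorem IsProperEdgeColoring.exists_three_le_card_biUnion_missingColors {H : SimpleGraph V}
    {c : Sym2 V → α} (hc : H.IsProperEdgeColoring c) {x y z : V} (hxy : x ≠ y) (hxz : x ≠ z)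
    (hyz : y ≠ z) {a b d : α} (hab : a ≠ b) (had : a ≠ d) (hbd : b ≠ d)
    (hM : ∀ w ∈ ({x, y, z} : Finset V),
      a ∈ H.missingColors c w ∧ b ∈ H.missingColors c w) :
    ∃ c' : Sym2 V → α, H.IsProperEdgeColoring c' ∧
      3 ≤ #(({x, y, z} : Finset V).biUnion (H.missingColors c')) := by
  classical
  set K := H.kempeGraph c a d
  have hKc : K.IsProperEdgeColoring c := hc.mono (H.kempeGraph_le c a d)
  have hK (w : V) : K.degree w ≤ 2 :=
    (hKc.degree_le_card (T := {a, d}) fun u hu => by simp [hu.2]).trans card_le_two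
  have hK₁ (w : V) (hw : w ∈ ({x, y, z} : Finset V)) : K.degree w ≤ 1 :=
    hKc.degree_le_card (T := {d}) fun u hu =>
      mem_singleton.2 (hu.2.resolve_left (mem_missingColors.1 (hM w hw).1 u hu.1))
  obtain ⟨p, hp, q, hq, hpq⟩ :
      ∃ p ∈ ({x, y, z} : Finset V), ∃ q ∈ ({x, y, z} : Finset V), ¬K.Reachable p q := by
    by_cases hr : K.Reachable x y
    · exact ⟨x, by simp, z, by simp, not_reachable_of_degree_le_one hK hxy hxz hyz
        (hK₁ x (by simp)) (hK₁ y (by simp)) (hK₁ z (by simp)) hr⟩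
    · exact ⟨x, by simp, y, by simp, hr⟩
  refine ⟨H.kempeSwap c a d p, hc.kempeSwap, ?_⟩
  have hq' : a ∈ H.missingColors (H.kempeSwap c a d p) q := by
    rw [missingColors_kempeSwap_of_not_reachable hpq]
    exact (hM q hq).1
  have hp' : b ∈ H.missingColors (H.kempeSwap c a d p) p ∧
      d ∈ H.missingColors (H.kempeSwap c a d p) p := by
    rw [mem_missingColors_kempeSwap_of_reachable (Reachable.refl p),
      mem_missingColors_kempeSwap_of_reachable (Reachable.refl p),
      Equiv.swap_apply_of_ne_of_ne hab.symm hbd, Equiv.swap_apply_right]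
    exact (hM p hp).symm
  calc 3 = #{a, b, d} := by rw [card_insert_of_notMem (by simp [hab, had]), card_pair hbd]
    _ ≤ _ := card_le_card <| by
      simp only [insert_subset_iff, singleton_subset_iff, mem_biUnion]
      exact ⟨⟨q, hq, hq'⟩, ⟨p, hp, hp'.1⟩, ⟨p, hp, hp'.2⟩⟩

theorem exists_isProperEdgeColoring_of_deleteIncidenceSet (hG : ∀ x, G.degree x ≤ 3)
    {c : Sym2 V → Fin 4} (hc : (G.deleteIncidenceSet v).IsProperEdgeColoring c) :
    ∃ c' : Sym2 V → Fin 4, G.IsProperEdgeColoring c' := by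
  have hM (c' : Sym2 V → Fin 4) (y : V) (hy : G.Adj v y) :
      2 ≤ #((G.deleteIncidenceSet v).missingColors c' y) := by
    have h1 := card_sub_degree_le_card_missingColors (G := G.deleteIncidenceSet v) (x := y) c'
    have h2 := degree_deleteIncidenceSet_add_one_le hy
    have h3 := hG y
    rw [Fintype.card_fin] at h1
    omega
  by_cases hU : G.degree v ≤
      #((G.neighborFinset v).biUnion ((G.deleteIncidenceSet v).missingColors c))
  · exact exists_isProperEdgeColoring_of_le_card_biUnion hc (hG v) (hM c) hU
  obtain ⟨h3, a, b, hab, habM⟩ := Finset.forall_mem_pair_of_card_biUnion_lt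
    (fun y hy => hM c y ((G.mem_neighborFinset v y).1 hy)) (hG v) (not_le.1 hU)
  obtain ⟨d, hd⟩ : ({a, b} : Finset (Fin 4))ᶜ.Nonempty := by
    rw [← card_pos, card_compl, card_pair hab]
    decide
  simp only [mem_compl, mem_insert, mem_singleton, not_or] at hd
  obtain ⟨x, y, z, hxy, hxz, hyz, hN⟩ := card_eq_three.1 h3
  rw [hN] at habM
  obtain ⟨c', hc', h3'⟩ := hc.exists_three_le_card_biUnion_missingColors hxy hxz hyz hab
    (Ne.symm hd.1) (Ne.symm hd.2) habM
  refine exists_isProperEdgeColoring_of_le_card_biUnion hc' (hG v) (hM c') ?_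
  rw [hN]
  exact (hG v).trans h3'

end Extension

theorem exists_isProperEdgeColoring_of_degree_le_three [Fintype V] [DecidableEq V]
    (G : SimpleGraph V) [DecidableRel G.Adj] (hG : ∀ x, G.degree x ≤ 3) :
    ∃ c : Sym2 V → Fin 4, G.IsProperEdgeColoring c := by
  induction hn : #G.edgeFinset using Nat.strong_induction_on generalizing G with
  | _ n ih =>
  by_cases hv : ∃ v, 0 < G.degree v
  · obtain ⟨v, hv⟩ := hv
    have hlt : #(G.deleteIncidenceSet v).edgeFinset < n := by
      rw [card_edgeFinset_deleteIncidenceSet, ← hn]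
      have := G.degree_le_card_edgeFinset (v := v)
      omega
    obtain ⟨c, hc⟩ := ih _ hlt (G.deleteIncidenceSet v)
      (fun x => (degree_le_of_le (deleteIncidenceSet_le G v)).trans (hG x)) rfl
    exact exists_isProperEdgeColoring_of_deleteIncidenceSet hG hc
  · push Not at hv
    exact ⟨fun _ => 0, fun x y _ hy => absurd ((G.degree_pos_iff_exists_adj x).2 ⟨y, hy⟩)
      (by simp [hv x])⟩

section Split

variable {ι : V → Type*}

/-- Vertex `x` is split into the pieces `⟨x, i⟩`, and its edge to `y` is attached to the piece
`⟨x, p x y⟩`. -/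
def splitGraph (G : SimpleGraph V) (p : ∀ x, V → ι x) : SimpleGraph (Σ x, ι x) where
  Adj a b := G.Adj a.1 b.1 ∧ p a.1 b.1 = a.2 ∧ p b.1 a.1 = b.2
  symm.symm _ _ h := ⟨h.1.symm, h.2.2, h.2.1⟩
  loopless.irrefl _ h := G.loopless.irrefl _ h.1

variable {G : SimpleGraph V} {p : ∀ x, V → ι x}

theorem splitGraph_adj_mk {x y : V} :
    (G.splitGraph p).Adj ⟨x, p x y⟩ ⟨y, p y x⟩ ↔ G.Adj x y := by
  simp [splitGraph]

theorem degree_splitGraph_le [Fintype V] [DecidableRel G.Adj] [∀ x, DecidableEq (ι x)]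
    (x : V) (i : ι x) [Fintype ((G.splitGraph p).neighborSet ⟨x, i⟩)] :
    (G.splitGraph p).degree ⟨x, i⟩ ≤ #{y ∈ G.neighborFinset x | p x y = i} := by
  classical
  refine (card_le_card fun b hb => ?_).trans (card_image_le (f := fun y => ⟨y, p y x⟩))
  obtain ⟨hxb, hi, hb⟩ := (mem_neighborFinset _ _ _).1 hb
  refine mem_image.2 ⟨b.1, by simpa [hxb] using hi, ?_⟩
  ext <;> simp [hb]

theorem IsProperEdgeColoring.card_filter_le_of_splitGraph [Fintype V] [DecidableRel G.Adj]
    [DecidableEq α] {u : V} [Fintype (ι u)] {c : Sym2 (Σ x, ι x) → α}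
    (hc : (G.splitGraph p).IsProperEdgeColoring c) (a : α) :
    #{y ∈ G.neighborFinset u | c s(⟨u, p u y⟩, ⟨y, p y u⟩) = a} ≤
      Fintype.card (ι u) := by
  refine (card_le_card_of_injOn (p u) (fun _ _ => mem_coe.2 (mem_univ _)) ?_).trans_eq
    card_univ
  intro y hy z hz h
  rw [mem_coe, mem_filter, mem_neighborFinset] at hy hz
  have hz' : (G.splitGraph p).Adj ⟨u, p u y⟩ ⟨z, p z u⟩ := ⟨hz.1, h.symm, rfl⟩
  have hcol : c s(⟨u, p u y⟩, ⟨y, p y u⟩) = c s(⟨u, p u y⟩, ⟨z, p z u⟩) := by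
    rw [hy.2, h, hz.2]
  exact congrArg Sigma.fst (hc (splitGraph_adj_mk.2 hy.1) hz' hcol)

end Split

end SimpleGraph

/-- Every finite graph of minimum degree at least 2 has a majority edge 4-coloring. -/
theorem majority_four_colors {V : Type*} [Fintype V] [DecidableEq V]
    (G : SimpleGraph V) [DecidableRel G.Adj] (hδ : ∀ v : V, 2 ≤ G.degree v) :
    ∃ c : Sym2 V → Fin 4, IsMajorityEdgeColoring G c := by
  classical
  choose p hp using fun x => (G.neighborFinset x).exists_fin_half_fiber_card_le_three (hδ x)
  obtain ⟨c, hc⟩ := (G.splitGraph p).exists_isProperEdgeColoring_of_degree_le_three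
    fun a => (degree_splitGraph_le (p := p) a.1 a.2).trans (hp a.1 a.2)
  refine ⟨Sym2.lift ⟨fun x y => c s(⟨x, p x y⟩, ⟨y, p y x⟩), fun x y => by
    simp only [Sym2.eq_swap]⟩, fun u a => ?_⟩
  have hcard := hc.card_filter_le_of_splitGraph (u := u) a
  rw [Fintype.card_fin] at hcard
  simp only [Sym2.lift_mk]
  exact (Nat.mul_le_mul_left 2 hcard).trans (Nat.mul_div_le _ _)
end
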